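/- arXiv:2403.12681 — 3 statements merged into one kernel-verified Lean document; each statement's English description precedes it below -/
import Mathlib

section
/- Let k be an infinite field, A a k-domain, and 𝔤 a ℤⁿ-grading of A given by A = ⊕_{i∈ℤⁿ} A_i; let S = {i ∈ ℤⁿ : A_i ≠ 0}, a submonoid of ℤⁿ. If T(𝔤) is a normal subgroup of Aut_k(A), then there exists a group homomorphism Aut_k(A) → Aut(S), α ↦ α̃ (into the group of monoid automorphisms of S), such that α(A_i) = A_{α̃(i)} for every α ∈ Aut_k(A) and every i ∈ S; moreover, the kernel of this homomorphism is the centralizer C(T(𝔤)) of T(𝔤) in Aut_k(A). -/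
open MvPolynomial

set_option synthInstance.maxHeartbeats 400000
set_option maxHeartbeats 1000000

noncomputable section

/-- `α` belongs to the subtorus `T(𝔤)` of `Aut_k(A)` determined by the `ℤⁿ`-grading `𝒜`:
for some `t ∈ (k*)ⁿ`, `α` multiplies each homogeneous element of degree `i ∈ ℤⁿ` by
`t₁^{i₁} ⋯ t_n^{i_n}`. -/
def InSubtorusZn {k A : Type*} [Field k] [CommRing A] [Algebra k A] {n : ℕ}
    (𝒜 : (Fin n → ℤ) → Submodule k A) (α : A ≃ₐ[k] A) : Prop :=
  ∃ t : Fin n → kˣ, ∀ (i : Fin n → ℤ) (a : A), a ∈ 𝒜 i →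
    α a = ((∏ j : Fin n, t j ^ i j : kˣ) : k) • a

section Aux

variable {k : Type} [Field k] {n : ℕ}

/-- The character of the torus attached to a degree. -/
def chiZn (i : Fin n → ℤ) (t : Fin n → kˣ) : kˣ := ∏ j : Fin n, t j ^ i j

lemma chiZn_add (i j : Fin n → ℤ) (t : Fin n → kˣ) :
    chiZn (i + j) t = chiZn i t * chiZn j t := by
  simp [chiZn, zpow_add, Finset.prod_mul_distrib]

lemma chiZn_zero (t : Fin n → kˣ) : chiZn (0 : Fin n → ℤ) t = 1 := by simp [chiZn]

lemma chiZn_inv (i : Fin n → ℤ) (t : Fin n → kˣ) : chiZn i t⁻¹ = (chiZn i t)⁻¹ := by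
  rw [chiZn, chiZn, ← Finset.prod_inv_distrib]
  simp [inv_zpow]

/-- Over an infinite field, characters separate degrees. -/
lemma chiZn_sep [Infinite k] {i j : Fin n → ℤ}
    (h : ∀ t : Fin n → kˣ, chiZn i t = chiZn j t) : i = j := by
  funext m
  by_contra hm
  have key : ∀ u : kˣ, u ^ i m = u ^ j m := by
    intro u
    have hi : ∀ (e : Fin n → ℤ), chiZn e (Function.update (fun _ => (1 : kˣ)) m u) = u ^ e m := by
      intro e
      rw [chiZn, Finset.prod_eq_single_of_mem m (Finset.mem_univ m)]
      · simp
      · intro b _ hb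
        simp [Function.update_of_ne hb]
    have := h (Function.update (fun _ => (1 : kˣ)) m u)
    rw [hi, hi] at this
    exact this
  have key2 : ∀ u : kˣ, u ^ (i m - j m) = 1 := by
    intro u
    rw [zpow_sub, key u, mul_inv_cancel]
  set d : ℤ := i m - j m with hd
  have hd0 : d ≠ 0 := sub_ne_zero.mpr hm
  set N : ℕ := d.natAbs with hN
  have hN0 : N ≠ 0 := Int.natAbs_ne_zero.mpr hd0
  have keyN : ∀ u : kˣ, u ^ N = 1 := by
    intro u
    rcases Int.natAbs_eq d with h' | h'
    · have := key2 u; rw [h'] at this; exact_mod_cast this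
    · have := key2 u; rw [h', zpow_neg, inv_eq_one] at this; exact_mod_cast this
  have hfin : Set.Finite {x : k | (Polynomial.X ^ N - Polynomial.C 1 : Polynomial k).IsRoot x} := by
    exact Polynomial.finite_setOf_isRoot (Polynomial.X_pow_sub_C_ne_zero (Nat.pos_of_ne_zero hN0) 1)
  have hfin2 : Set.Finite ({x : k | (Polynomial.X ^ N - Polynomial.C 1 : Polynomial k).IsRoot x}
      ∪ {0}) := hfin.union (Set.finite_singleton 0)
  obtain ⟨x, hx⟩ := hfin2.infinite_compl.nonempty
  rw [Set.mem_compl_iff, Set.mem_union, not_or] at hx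
  have hx0 : x ≠ 0 := fun h => hx.2 (by simp [h])
  have hroot : x ^ N ≠ 1 := by
    intro h
    exact hx.1 (by simp [Polynomial.IsRoot, h])
  apply hroot
  have := congrArg Units.val (keyN (Units.mk0 x hx0))
  simpa using this

variable {A : Type} [CommRing A] [Algebra k A]
variable (𝒜 : (Fin n → ℤ) → Submodule k A) [GradedAlgebra 𝒜]

/-- The linear endomorphism scaling the degree-`i` component by `χ_i(t)`. -/
def phiLin (t : Fin n → kˣ) : A →ₗ[k] A :=
  (DirectSum.toModule k _ A fun j => ((chiZn j t : k) • (𝒜 j).subtype)) ∘ₗ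
    (DirectSum.decomposeLinearEquiv 𝒜).toLinearMap

lemma phiLin_of_mem (t : Fin n → kˣ) {i : Fin n → ℤ} {a : A} (ha : a ∈ 𝒜 i) :
    phiLin 𝒜 t a = ((chiZn i t : k)) • a := by
  rw [phiLin, LinearMap.comp_apply]
  have : (DirectSum.decomposeLinearEquiv 𝒜).toLinearMap a
      = DirectSum.lof k _ (fun j => 𝒜 j) i ⟨a, ha⟩ := by
    simp [DirectSum.decomposeLinearEquiv_apply, DirectSum.decompose_of_mem 𝒜 ha, DirectSum.lof_eq_of]
  rw [this, DirectSum.toModule_lof]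
  rfl

lemma phiLin_comp (t : Fin n → kˣ) (a : A) : phiLin 𝒜 t (phiLin 𝒜 t⁻¹ a) = a := by
  induction a using DirectSum.Decomposition.inductionOn 𝒜 with
  | zero => simp
  | homogeneous m =>
      rw [phiLin_of_mem 𝒜 t⁻¹ m.2, map_smul, phiLin_of_mem 𝒜 t m.2, chiZn_inv, smul_smul]
      norm_cast
      rw [inv_mul_cancel]
      simp
  | add x y hx hy => rw [map_add, map_add, hx, hy]

/-- The torus automorphism attached to `t`. -/
def phiAut (t : Fin n → kˣ) : A ≃ₐ[k] A :=
  AlgEquiv.ofLinearEquiv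
    (LinearEquiv.ofLinear (phiLin 𝒜 t) (phiLin 𝒜 t⁻¹)
      (LinearMap.ext fun a => phiLin_comp 𝒜 t a)
      (LinearMap.ext fun a => by
        have := phiLin_comp 𝒜 t⁻¹ a
        rwa [inv_inv] at this))
    (by
      have h1 : (1 : A) ∈ 𝒜 0 := SetLike.one_mem_graded 𝒜
      show phiLin 𝒜 t 1 = 1
      rw [phiLin_of_mem 𝒜 t h1, chiZn_zero]
      simp)
    (by
      intro x y
      show phiLin 𝒜 t (x * y) = phiLin 𝒜 t x * phiLin 𝒜 t y
      induction x using DirectSum.Decomposition.inductionOn 𝒜 with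
      | zero => simp
      | homogeneous mx =>
          induction y using DirectSum.Decomposition.inductionOn 𝒜 with
          | zero => simp
          | homogeneous my =>
              rw [phiLin_of_mem 𝒜 t (SetLike.mul_mem_graded mx.2 my.2),
                phiLin_of_mem 𝒜 t mx.2, phiLin_of_mem 𝒜 t my.2, chiZn_add,
                smul_mul_smul_comm]
              norm_cast
          | add y₁ y₂ hy₁ hy₂ =>
              rw [mul_add, map_add, hy₁, hy₂, map_add, mul_add]
      | add x₁ x₂ hx₁ hx₂ =>
          rw [add_mul, map_add, hx₁, hx₂, map_add, add_mul])

lemma phiAut_apply_of_mem (t : Fin n → kˣ) {i : Fin n → ℤ} {a : A} (ha : a ∈ 𝒜 i) :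
    phiAut 𝒜 t a = ((chiZn i t : k)) • a :=
  phiLin_of_mem 𝒜 t ha

lemma phiAut_inSubtorus (t : Fin n → kˣ) : InSubtorusZn 𝒜 (phiAut 𝒜 t) :=
  ⟨t, fun i a ha => phiAut_apply_of_mem 𝒜 t ha⟩

lemma decompose_phiAut (t : Fin n → kˣ) (b : A) (j : Fin n → ℤ) :
    ((DirectSum.decompose 𝒜 (phiAut 𝒜 t b) j : A))
      = (chiZn j t : k) • ((DirectSum.decompose 𝒜 b j : A)) := by
  induction b using DirectSum.Decomposition.inductionOn 𝒜 with
  | zero => simp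
  | homogeneous m =>
      rename_i i
      rw [phiAut_apply_of_mem 𝒜 t m.2]
      by_cases hij : i = j
      · subst hij
        rw [DirectSum.decompose_of_mem_same 𝒜 ((𝒜 i).smul_mem _ m.2),
          DirectSum.decompose_of_mem_same 𝒜 m.2]
      · rw [DirectSum.decompose_of_mem_ne 𝒜 ((𝒜 i).smul_mem _ m.2) hij,
          DirectSum.decompose_of_mem_ne 𝒜 m.2 hij, smul_zero]
  | add x y hx hy =>
      rw [map_add, DirectSum.decompose_add, DirectSum.decompose_add, DirectSum.add_apply,
        DirectSum.add_apply, Submodule.coe_add, Submodule.coe_add, hx, hy, smul_add]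

end Aux

section Key

variable {k : Type} [Field k] [Infinite k]
variable {A : Type} [CommRing A] [IsDomain A] [Algebra k A] {n : ℕ}
variable (𝒜 : (Fin n → ℤ) → Submodule k A) [GradedAlgebra 𝒜]

/-- Key homogeneity lemma: if the torus is normal, every automorphism sends nonzero
homogeneous elements to homogeneous elements. -/
lemma homog (hnorm : ∀ α β : A ≃ₐ[k] A, InSubtorusZn 𝒜 β → InSubtorusZn 𝒜 (α * β * α⁻¹))
    (α : A ≃ₐ[k] A) {i : Fin n → ℤ} {a : A} (ha : a ∈ 𝒜 i) (ha0 : a ≠ 0) :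
    ∃ j, α a ∈ 𝒜 j ∧ α a ≠ 0 := by
  classical
  haveI : Module.IsTorsionFree k A :=
    Module.isTorsionFree_iff_algebraMap_injective.mpr (algebraMap k A).injective
  set c : A := α a with hc
  have hc0 : c ≠ 0 := fun h => ha0 (α.injective (by rw [← hc, h, map_zero]))
  -- eigenvalue equation for every s
  have eig : ∀ s : Fin n → kˣ, ∃ u : kˣ,
      ∀ j : Fin n → ℤ, (chiZn j s : k) • ((DirectSum.decompose 𝒜 c j : A))
        = (u : k) • ((DirectSum.decompose 𝒜 c j : A)) := by
    intro s
    obtain ⟨t', ht'⟩ := hnorm α⁻¹ (phiAut 𝒜 s) (phiAut_inSubtorus 𝒜 s)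
    refine ⟨chiZn i t', fun j => ?_⟩
    have h1 : (α⁻¹ * phiAut 𝒜 s * α⁻¹⁻¹) a = (chiZn i t' : k) • a := ht' i a ha
    rw [inv_inv] at h1
    have h2 : phiAut 𝒜 s c = (chiZn i t' : k) • c := by
      have : α ((α⁻¹ * phiAut 𝒜 s * α) a) = α ((chiZn i t' : k) • a) := congrArg α h1
      have h3 : (α⁻¹ * phiAut 𝒜 s * α) a = α.symm (phiAut 𝒜 s (α a)) := rfl
      rw [h3, AlgEquiv.apply_symm_apply, map_smul] at this
      exact this
    have := congrArg (fun x => ((DirectSum.decompose 𝒜 x j : A))) h2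
    simp only at this
    rw [decompose_phiAut] at this
    rw [this, DirectSum.decompose_smul, DirectSum.smul_apply, Submodule.coe_smul]
  -- all degrees in the support coincide
  have supp_eq : ∀ j₁ j₂ : Fin n → ℤ,
      ((DirectSum.decompose 𝒜 c j₁ : A)) ≠ 0 → ((DirectSum.decompose 𝒜 c j₂ : A)) ≠ 0 →
      j₁ = j₂ := by
    intro j₁ j₂ h1 h2
    apply chiZn_sep (k := k)
    intro s
    obtain ⟨u, hu⟩ := eig s
    have e1 : chiZn j₁ s = u := by
      have := hu j₁
      have := smul_left_injective k h1 this
      exact Units.ext this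
    have e2 : chiZn j₂ s = u := by
      have := hu j₂
      have := smul_left_injective k h2 this
      exact Units.ext this
    rw [e1, e2]
  -- support is nonempty
  have hsum := DirectSum.sum_support_decompose 𝒜 c
  have hne : (DirectSum.decompose 𝒜 c).support.Nonempty := by
    rcases Finset.eq_empty_or_nonempty (DirectSum.decompose 𝒜 c).support with h | h
    · rw [h, Finset.sum_empty] at hsum
      exact absurd hsum.symm hc0
    · exact h
  obtain ⟨j₀, hj₀⟩ := hne
  have hj₀0 : ((DirectSum.decompose 𝒜 c j₀ : A)) ≠ 0 := by
    have := DFinsupp.mem_support_iff.mp hj₀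
    exact fun h => this (Subtype.ext h)
  have : c = ((DirectSum.decompose 𝒜 c j₀ : A)) := by
    conv_lhs => rw [← hsum]
    apply Finset.sum_eq_single_of_mem j₀ hj₀
    intro b hb hbne
    exfalso
    apply hbne
    apply supp_eq
    · intro h
      exact DFinsupp.mem_support_iff.mp hb (Subtype.ext h)
    · exact hj₀0
  exact ⟨j₀, by rw [hc] at this ⊢; rw [this]; exact (DirectSum.decompose 𝒜 c j₀).2, hc0⟩

/-- Two nonzero elements of the same degree map to the same degree. -/
lemma same_deg (hnorm : ∀ α β : A ≃ₐ[k] A, InSubtorusZn 𝒜 β → InSubtorusZn 𝒜 (α * β * α⁻¹))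
    (α : A ≃ₐ[k] A) {i j j' : Fin n → ℤ} {a b : A}
    (ha : a ∈ 𝒜 i) (ha0 : a ≠ 0) (hb : b ∈ 𝒜 i) (hb0 : b ≠ 0)
    (hja : α a ∈ 𝒜 j) (hjb : α b ∈ 𝒜 j') : j = j' := by
  have ha0' : α a ≠ 0 := fun h => ha0 (by simpa using congrArg α.symm h)
  have hb0' : α b ≠ 0 := fun h => hb0 (by simpa using congrArg α.symm h)
  by_cases hjj : j = j'
  · exact hjj
  rcases eq_or_ne (a + b) 0 with hab | hab
  · -- b = -a
    have hb' : b = -a := eq_neg_of_add_eq_zero_right hab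
    have : α b ∈ 𝒜 j := by
      rw [hb', map_neg]
      exact Submodule.neg_mem _ hja
    exact DirectSum.degree_eq_of_mem_mem 𝒜 this hjb hb0'
  · obtain ⟨j'', hj'', _⟩ := homog 𝒜 hnorm α (Submodule.add_mem _ ha hb) hab
    rw [map_add] at hj''
    have hdj : j = j'' := by
      by_contra h
      have h1 : ((DirectSum.decompose 𝒜 (α a + α b) j : A)) = 0 :=
        DirectSum.decompose_of_mem_ne 𝒜 hj'' (Ne.symm h)
      rw [DirectSum.decompose_add, DirectSum.add_apply, Submodule.coe_add,
        DirectSum.decompose_of_mem_same 𝒜 hja,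
        DirectSum.decompose_of_mem_ne 𝒜 hjb (Ne.symm hjj), add_zero] at h1
      exact ha0' h1
    have hdj' : j' = j'' := by
      by_contra h
      have h1 : ((DirectSum.decompose 𝒜 (α a + α b) j' : A)) = 0 :=
        DirectSum.decompose_of_mem_ne 𝒜 hj'' (Ne.symm h)
      rw [DirectSum.decompose_add, DirectSum.add_apply, Submodule.coe_add,
        DirectSum.decompose_of_mem_same 𝒜 hjb,
        DirectSum.decompose_of_mem_ne 𝒜 hja hjj, zero_add] at h1
      exact hb0' h1
    rw [hdj, hdj']

/-- The image of a nonzero homogeneous component is the full corresponding component. -/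
lemma map_deg (hnorm : ∀ α β : A ≃ₐ[k] A, InSubtorusZn 𝒜 β → InSubtorusZn 𝒜 (α * β * α⁻¹))
    (α : A ≃ₐ[k] A) {i j : Fin n → ℤ} {a : A}
    (ha : a ∈ 𝒜 i) (ha0 : a ≠ 0) (hj : α a ∈ 𝒜 j) :
    Submodule.map α.toLinearMap (𝒜 i) = 𝒜 j := by
  apply le_antisymm
  · rintro _ ⟨b, hb, rfl⟩
    show α b ∈ 𝒜 j
    rcases eq_or_ne b 0 with rfl | hb0
    · rw [map_zero]; exact Submodule.zero_mem _
    · obtain ⟨j', hj', _⟩ := homog 𝒜 hnorm α hb hb0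
      have := same_deg 𝒜 hnorm α ha ha0 hb hb0 hj hj'
      rw [this]; exact hj'
  · intro c hc
    rcases eq_or_ne c 0 with rfl | hc0
    · exact Submodule.zero_mem _
    · have ha0' : α a ≠ 0 := fun h => ha0 (α.injective (by rw [h, map_zero]))
      have hsa : α⁻¹ (α a) = a := α.symm_apply_apply a
      obtain ⟨i', hi', _⟩ := homog 𝒜 hnorm α⁻¹ hc hc0
      have hii : i = i' := by
        refine same_deg 𝒜 hnorm α⁻¹ hj ha0' hc hc0 ?_ hi'
        rw [show α⁻¹ (α a) = a from hsa]
        exact ha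
      refine ⟨α⁻¹ c, ?_, α.apply_symm_apply c⟩
      rw [← hii] at hi'
      exact hi'

end Key

/-- Proposition 2.14 (CpnoiuB387vbxncAru): let `k` be an infinite field, `A` a `k`-domain
with a `ℤⁿ`-grading `𝒜`, and `S = {i ∈ ℤⁿ | A_i ≠ 0}` the associated submonoid.
If `T(𝔤)` is normal in `Aut_k(A)`, then there is a group homomorphism
`Φ : Aut_k(A) → Aut(S)` with `α(A_i) = A_{Φ(α)(i)}` for all `α` and `i ∈ S`, whose kernel
is the centralizer of `T(𝔤)` in `Aut_k(A)`. -/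
theorem statement_8 (k : Type) [Field k] [Infinite k]
    (A : Type) [CommRing A] [IsDomain A] [Algebra k A] (n : ℕ)
    (𝒜 : (Fin n → ℤ) → Submodule k A) [GradedAlgebra 𝒜]
    (S : AddSubmonoid (Fin n → ℤ)) (hS : ∀ i : Fin n → ℤ, i ∈ S ↔ 𝒜 i ≠ ⊥)
    (hnorm : ∀ α β : A ≃ₐ[k] A, InSubtorusZn 𝒜 β → InSubtorusZn 𝒜 (α * β * α⁻¹)) :
    ∃ Φ : (A ≃ₐ[k] A) →* Multiplicative (AddAut S),
      (∀ (α : A ≃ₐ[k] A) (i : S),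
        Submodule.map α.toLinearMap (𝒜 (i : Fin n → ℤ)) = 𝒜 ((Multiplicative.toAdd (Φ α) i : S) : Fin n → ℤ)) ∧
      (∀ α : A ≃ₐ[k] A, Φ α = 1 ↔ ∀ β : A ≃ₐ[k] A, InSubtorusZn 𝒜 β → α * β = β * α) := by
  classical
  have exU : ∀ (α : A ≃ₐ[k] A) (i : S), ∃ j : S,
      Submodule.map α.toLinearMap (𝒜 (i : Fin n → ℤ)) = 𝒜 (j : Fin n → ℤ) := by
    intro α i
    obtain ⟨a, ha, ha0⟩ := Submodule.exists_mem_ne_zero_of_ne_bot ((hS i).mp i.2)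
    obtain ⟨j, hj, hj0⟩ := homog 𝒜 hnorm α ha ha0
    exact ⟨⟨j, (hS j).mpr ((Submodule.ne_bot_iff _).mpr ⟨α a, hj, hj0⟩)⟩,
      map_deg 𝒜 hnorm α ha ha0 hj⟩
  set D : (A ≃ₐ[k] A) → S → S := fun α i => (exU α i).choose with hDdef
  have hD : ∀ (α : A ≃ₐ[k] A) (i : S),
      Submodule.map α.toLinearMap (𝒜 (i : Fin n → ℤ)) = 𝒜 ((D α i : S) : Fin n → ℤ) :=
    fun α i => (exU α i).choose_spec
  have hmapbot : ∀ (α : A ≃ₐ[k] A) (i : S),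
      Submodule.map α.toLinearMap (𝒜 (i : Fin n → ℤ)) ≠ ⊥ := by
    intro α i
    obtain ⟨a, ha, ha0⟩ := Submodule.exists_mem_ne_zero_of_ne_bot ((hS i).mp i.2)
    apply (Submodule.ne_bot_iff _).mpr
    exact ⟨α a, Submodule.mem_map_of_mem ha,
      fun h => ha0 (α.injective (by rw [h, map_zero]))⟩
  have hU : ∀ (α : A ≃ₐ[k] A) (i j : S),
      Submodule.map α.toLinearMap (𝒜 (i : Fin n → ℤ)) = 𝒜 (j : Fin n → ℤ) → D α i = j := by
    intro α i j h
    have h2 := hD α i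
    obtain ⟨x, hx, hx0⟩ := Submodule.exists_mem_ne_zero_of_ne_bot (h2 ▸ hmapbot α i)
    apply Subtype.ext
    exact DirectSum.degree_eq_of_mem_mem 𝒜 hx (by rw [← h2, h] at hx; exact hx) hx0
  have hcomp : ∀ (α β : A ≃ₐ[k] A) (i : S), D (α * β) i = D α (D β i) := by
    intro α β i
    apply hU
    have hlm : (α * β).toLinearMap = α.toLinearMap ∘ₗ β.toLinearMap := rfl
    rw [hlm, Submodule.map_comp, hD β i, hD α (D β i)]
  have hone : ∀ i : S, D 1 i = i := by
    intro i
    apply hU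
    have hlm : (1 : A ≃ₐ[k] A).toLinearMap = LinearMap.id := rfl
    rw [hlm, Submodule.map_id]
  have hinv : ∀ (α : A ≃ₐ[k] A) (i : S), D α⁻¹ (D α i) = i := by
    intro α i
    have h1 := hcomp α⁻¹ α i
    rw [inv_mul_cancel] at h1
    rw [← h1, hone]
  have hadd : ∀ (α : A ≃ₐ[k] A) (i j : S), D α (i + j) = D α i + D α j := by
    intro α i j
    obtain ⟨a, ha, ha0⟩ := Submodule.exists_mem_ne_zero_of_ne_bot ((hS i).mp i.2)
    obtain ⟨b, hb, hb0⟩ := Submodule.exists_mem_ne_zero_of_ne_bot ((hS j).mp j.2)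
    have hai : α a ∈ 𝒜 ((D α i : S) : Fin n → ℤ) := by
      rw [← hD α i]; exact Submodule.mem_map_of_mem ha
    have hbj : α b ∈ 𝒜 ((D α j : S) : Fin n → ℤ) := by
      rw [← hD α j]; exact Submodule.mem_map_of_mem hb
    have hab : a * b ∈ 𝒜 (((i + j : S)) : Fin n → ℤ) := by
      rw [AddSubmonoid.coe_add]
      exact SetLike.mul_mem_graded ha hb
    have h1 : α (a * b) ∈ 𝒜 ((D α (i + j) : S) : Fin n → ℤ) := by
      rw [← hD α (i + j)]; exact Submodule.mem_map_of_mem hab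
    have h2 : α (a * b) ∈ 𝒜 (((D α i : S) : Fin n → ℤ) + ((D α j : S) : Fin n → ℤ)) := by
      rw [map_mul]
      exact SetLike.mul_mem_graded hai hbj
    have hne : α (a * b) ≠ 0 :=
      fun h => (mul_ne_zero ha0 hb0) (α.injective (by rw [h, map_zero]))
    apply Subtype.ext
    rw [AddSubmonoid.coe_add]
    exact DirectSum.degree_eq_of_mem_mem 𝒜 h1 h2 hne
  let E : (A ≃ₐ[k] A) → Multiplicative (AddAut S) := fun α => Multiplicative.ofAdd
    { toFun := D α
      invFun := D α⁻¹
      left_inv := hinv α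
      right_inv := fun i => by have := hinv α⁻¹ i; rwa [inv_inv] at this
      map_add' := hadd α }
  have hmul : ∀ α β : A ≃ₐ[k] A, E (α * β) = E α * E β := by
    intro α β
    apply AddEquiv.ext
    intro i
    exact hcomp α β i
  refine ⟨MonoidHom.mk' E hmul, ?_, ?_⟩
  · intro α i
    exact hD α i
  · intro α
    constructor
    · intro h β hβ
      have hD1 : ∀ i : S, D α i = i := by
        intro i
        have := DFunLike.congr_fun (congrArg Multiplicative.toAdd h) i
        simp at this
        exact this
      have hpres : ∀ (iz : Fin n → ℤ) (x : A), x ∈ 𝒜 iz → α x ∈ 𝒜 iz := by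
        intro iz x hx
        by_cases hbz : 𝒜 iz = ⊥
        · rw [hbz] at hx ⊢
          rw [Submodule.mem_bot] at hx ⊢
          rw [hx, map_zero]
        · have hi : iz ∈ S := (hS iz).mpr hbz
          have hfix : D α ⟨iz, hi⟩ = ⟨iz, hi⟩ := hD1 ⟨iz, hi⟩
          have := hD α ⟨iz, hi⟩
          rw [hfix] at this
          rw [← this]
          exact Submodule.mem_map_of_mem hx
      obtain ⟨t, ht⟩ := hβ
      apply AlgEquiv.ext
      intro x
      show α (β x) = β (α x)
      induction x using DirectSum.Decomposition.inductionOn 𝒜 with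
      | zero => simp
      | homogeneous m =>
          rw [ht _ _ m.2, map_smul, ht _ _ (hpres _ _ m.2)]
      | add x y hx hy =>
          rw [map_add, map_add, map_add, hx, hy, map_add]
    · intro hcomm
      apply AddEquiv.ext
      intro i
      show D α i = i
      obtain ⟨a, ha, ha0⟩ := Submodule.exists_mem_ne_zero_of_ne_bot ((hS i).mp i.2)
      have ha0' : α a ≠ 0 := fun h => ha0 (α.injective (by rw [h, map_zero]))
      have hai : α a ∈ 𝒜 ((D α i : S) : Fin n → ℤ) := by
        rw [← hD α i]; exact Submodule.mem_map_of_mem ha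
      have key : ∀ t : Fin n → kˣ,
          chiZn ((i : S) : Fin n → ℤ) t = chiZn ((D α i : S) : Fin n → ℤ) t := by
        intro t
        have hcom := hcomm (phiAut 𝒜 t) (phiAut_inSubtorus 𝒜 t)
        have := DFunLike.congr_fun hcom a
        have heq : α (phiAut 𝒜 t a) = phiAut 𝒜 t (α a) := this
        rw [phiAut_apply_of_mem 𝒜 t ha, map_smul, phiAut_apply_of_mem 𝒜 t hai] at heq
        exact Units.ext (smul_left_injective k ha0' heq)
      have := chiZn_sep (k := k) key
      exact Subtype.ext this.symm
end
end

section
/- Let k be an infinite field, A a k-domain, and 𝔤 an ℕ-grading of A. If T(𝔤) is a normal subgroup of Aut_k(A), then Aut_k(A) = C(T(𝔤)); equivalently, every k-algebra automorphism of A preserves each graded piece A_i. -/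
open MvPolynomial

set_option synthInstance.maxHeartbeats 400000
set_option maxHeartbeats 1000000

noncomputable section

/-- `α` belongs to the subtorus `T(𝔤)` of `Aut_k(A)` determined by the `ℕ`-grading `𝒜`:
for some `t ∈ k*`, `α` multiplies each homogeneous element of degree `i` by `tⁱ`. -/
def InSubtorusN {k A : Type*} [Field k] [CommRing A] [Algebra k A]
    (𝒜 : ℕ → Submodule k A) (α : A ≃ₐ[k] A) : Prop :=
  ∃ t : kˣ, ∀ (i : ℕ) (a : A), a ∈ 𝒜 i → α a = ((t : k) ^ i) • a

namespace Statement9Aux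

open DirectSum

variable {k A : Type} [Field k] [CommRing A] [Algebra k A]
  (𝒜 : ℕ → Submodule k A) [GradedAlgebra 𝒜]

def philin (t : k) : A →ₗ[k] A :=
  ((decomposeLinearEquiv 𝒜).symm.toLinearMap).comp
    ((DFinsupp.mapRange.linearMap (fun i => (t ^ i) • (LinearMap.id : 𝒜 i →ₗ[k] 𝒜 i))).comp
      (decomposeLinearEquiv 𝒜).toLinearMap)

theorem philin_mem (t : k) {i : ℕ} {a : A} (ha : a ∈ 𝒜 i) :
    philin 𝒜 t a = t ^ i • a := by
  show (decomposeLinearEquiv 𝒜).symm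
    ((DFinsupp.mapRange.linearMap (fun i => (t ^ i) • (LinearMap.id : 𝒜 i →ₗ[k] 𝒜 i)))
      ((decomposeLinearEquiv 𝒜) a)) = t ^ i • a
  rw [decomposeLinearEquiv_apply, decomposeLinearEquiv_symm_apply]
  rw [decompose_of_mem 𝒜 ha]
  rw [show (DirectSum.of (fun i => 𝒜 i) i ⟨a, ha⟩) = DFinsupp.single i ⟨a, ha⟩ from rfl]
  rw [DFinsupp.mapRange.linearMap_apply, DFinsupp.mapRange_single]
  exact decompose_symm_of 𝒜 ((t ^ i • LinearMap.id : 𝒜 i →ₗ[k] 𝒜 i) ⟨a, ha⟩)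

theorem philin_mul (t : k) (x y : A) :
    philin 𝒜 t (x * y) = philin 𝒜 t x * philin 𝒜 t y := by
  refine DirectSum.Decomposition.inductionOn 𝒜
    (motive := fun x => ∀ y, philin 𝒜 t (x * y) = philin 𝒜 t x * philin 𝒜 t y)
    (fun y => by simp) (fun {i} m => ?_) (fun u v hu hv y => by
      simp only [add_mul, map_add, hu y, hv y]) x y
  intro y
  refine DirectSum.Decomposition.inductionOn 𝒜
    (motive := fun y => philin 𝒜 t ((m : A) * y) = philin 𝒜 t (m : A) * philin 𝒜 t y)
    (by simp) (fun {j} m' => ?_) (fun u v hu hv => by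
      simp only [mul_add, map_add, hu, hv]) y
  show philin 𝒜 t ((m : A) * (m' : A)) = philin 𝒜 t (m : A) * philin 𝒜 t (m' : A)
  rw [philin_mem 𝒜 t (SetLike.GradedMul.mul_mem m.2 m'.2),
    philin_mem 𝒜 t m.2, philin_mem 𝒜 t m'.2, smul_mul_smul_comm, ← pow_add]

def phihom (t : k) : A →ₐ[k] A :=
  AlgHom.ofLinearMap (philin 𝒜 t)
    (by rw [philin_mem 𝒜 t (SetLike.GradedOne.one_mem (A := 𝒜)), pow_zero, one_smul])
    (philin_mul 𝒜 t)

def phi (t : kˣ) : A ≃ₐ[k] A :=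
  AlgEquiv.ofAlgHom (phihom 𝒜 (t : k)) (phihom 𝒜 ((t⁻¹ : kˣ) : k))
    (by
      refine AlgHom.ext fun a => ?_
      show phihom 𝒜 (t : k) (phihom 𝒜 ((t⁻¹ : kˣ) : k) a) = a
      refine DirectSum.Decomposition.inductionOn 𝒜
        (motive := fun a => phihom 𝒜 (t : k) (phihom 𝒜 ((t⁻¹ : kˣ) : k) a) = a)
        (by simp) (fun {i} m => ?_) (fun u v hu hv => by
          simp only [map_add, hu, hv]) a
      show phihom 𝒜 (t : k) (phihom 𝒜 ((t⁻¹ : kˣ) : k) (m : A)) = (m : A)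
      rw [show phihom 𝒜 ((t⁻¹ : kˣ) : k) (m : A) = _ from philin_mem 𝒜 _ m.2,
        map_smul, show phihom 𝒜 (t : k) (m : A) = _ from philin_mem 𝒜 _ m.2,
        smul_smul, ← mul_pow]
      simp)
    (by
      refine AlgHom.ext fun a => ?_
      show phihom 𝒜 ((t⁻¹ : kˣ) : k) (phihom 𝒜 (t : k) a) = a
      refine DirectSum.Decomposition.inductionOn 𝒜
        (motive := fun a => phihom 𝒜 ((t⁻¹ : kˣ) : k) (phihom 𝒜 (t : k) a) = a)
        (by simp) (fun {i} m => ?_) (fun u v hu hv => by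
          simp only [map_add, hu, hv]) a
      show phihom 𝒜 ((t⁻¹ : kˣ) : k) (phihom 𝒜 (t : k) (m : A)) = (m : A)
      rw [show phihom 𝒜 (t : k) (m : A) = _ from philin_mem 𝒜 _ m.2,
        map_smul, show phihom 𝒜 ((t⁻¹ : kˣ) : k) (m : A) = _ from philin_mem 𝒜 _ m.2,
        smul_smul, ← mul_pow]
      simp)

theorem phi_mem (t : kˣ) {i : ℕ} {a : A} (ha : a ∈ 𝒜 i) :
    phi 𝒜 t a = ((t : k) ^ i) • a := philin_mem 𝒜 _ ha

theorem phi_inSubtorus (t : kˣ) : InSubtorusN 𝒜 (phi 𝒜 t) :=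
  ⟨t, fun _ _ ha => phi_mem 𝒜 t ha⟩

/-- In an infinite field, if every unit satisfies `t ^ n = 1` then `n = 0`. -/
theorem units_pow_eq_one {n : ℕ} [Infinite k] (h : ∀ t : kˣ, t ^ n = 1) : n = 0 := by
  by_contra hn
  have hp : (Polynomial.X ^ n - Polynomial.C (1 : k)) ≠ 0 :=
    Polynomial.X_pow_sub_C_ne_zero (Nat.pos_of_ne_zero hn) 1
  have hfin := Polynomial.finite_setOf_isRoot hp
  have hsub : ({(0 : k)}ᶜ : Set k) ⊆ {x | (Polynomial.X ^ n - Polynomial.C (1 : k)).IsRoot x} := by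
    intro x hx
    have hx0 : x ≠ 0 := hx
    have := congrArg Units.val (h (Units.mk0 x hx0))
    simp only [Units.val_pow_eq_pow_val, Units.val_mk0, Units.val_one] at this
    simp [Polynomial.IsRoot, sub_eq_zero, this]
  exact ((Set.finite_singleton (0 : k)).infinite_compl.mono hsub) hfin

theorem mem_of_decompose_eq_zero {x : A} {i : ℕ}
    (h : ∀ j, j ≠ i → (decompose 𝒜 x j : A) = 0) : x ∈ 𝒜 i := by
  classical
  have hx : x = (decompose 𝒜 x i : A) := by
    conv_lhs => rw [← DirectSum.sum_support_decompose 𝒜 x]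
    refine Finset.sum_eq_single i (fun b _ hb => h b hb) (fun hi => ?_)
    rw [DFinsupp.notMem_support_iff.mp hi, ZeroMemClass.coe_zero]
  rw [hx]
  exact SetLike.coe_mem _

theorem degree_eq {a : A} {i j : ℕ} (ha : a ≠ 0) (h1 : a ∈ 𝒜 i) (h2 : a ∈ 𝒜 j) : i = j := by
  by_contra hne
  exact ha (by rw [← decompose_of_mem_same 𝒜 h2, decompose_of_mem_ne 𝒜 h1 hne])

theorem decompose_insub {β : A ≃ₐ[k] A} {s : kˣ}
    (hs : ∀ (i : ℕ) (a : A), a ∈ 𝒜 i → β a = ((s : k) ^ i) • a) (x : A) (j : ℕ) :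
    (decompose 𝒜 (β x) j : A) = (s : k) ^ j • (decompose 𝒜 x j : A) := by
  refine DirectSum.Decomposition.inductionOn 𝒜
    (motive := fun x => (decompose 𝒜 (β x) j : A) = (s : k) ^ j • (decompose 𝒜 x j : A))
    (by simp) (fun {i} m => ?_) (fun u v hu hv => by
      simp only [map_add, decompose_add, DirectSum.add_apply, Submodule.coe_add, hu, hv,
        smul_add]) x
  show (decompose 𝒜 (β (m : A)) j : A) = (s : k) ^ j • (decompose 𝒜 (m : A) j : A)
  rw [hs i (m : A) m.2]
  rcases eq_or_ne i j with rfl | hne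
  · rw [decompose_of_mem_same 𝒜 ((𝒜 i).smul_mem _ m.2), decompose_of_mem_same 𝒜 m.2]
  · rw [decompose_of_mem_ne 𝒜 ((𝒜 i).smul_mem _ m.2) hne, decompose_of_mem_ne 𝒜 m.2 hne,
      smul_zero]

variable [IsDomain A]

theorem rel [Infinite k]
    (hnorm : ∀ α β : A ≃ₐ[k] A, InSubtorusN 𝒜 β → InSubtorusN 𝒜 (α * β * α⁻¹))
    (α : A ≃ₐ[k] A) (t : kˣ) :
    ∃ s : kˣ, ∀ (i : ℕ) (a : A), a ∈ 𝒜 i → ∀ j : ℕ,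
      (decompose 𝒜 (α a) j : A) ≠ 0 → s ^ j = t ^ i := by
  haveI : NoZeroSMulDivisors k A :=
    inferInstance
  obtain ⟨s, hs⟩ := hnorm α (phi 𝒜 t) (phi_inSubtorus 𝒜 t)
  refine ⟨s, fun i a ha j hne => ?_⟩
  have h1 : (α * phi 𝒜 t * α⁻¹) (α a) = (t : k) ^ i • (α a) := by
    show α (phi 𝒜 t (α.symm (α a))) = (t : k) ^ i • (α a)
    rw [α.symm_apply_apply, phi_mem 𝒜 t ha, map_smul]
  have h2 : (s : k) ^ j • (decompose 𝒜 (α a) j : A)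
      = (t : k) ^ i • (decompose 𝒜 (α a) j : A) := by
    rw [← decompose_insub 𝒜 hs (α a) j, h1, decompose_smul, DirectSum.smul_apply,
      Submodule.coe_smul]
  have h3 : ((s : k) ^ j - (t : k) ^ i) • (decompose 𝒜 (α a) j : A) = 0 := by
    rw [sub_smul, h2, sub_self]
  rcases smul_eq_zero.mp h3 with h4 | h4
  · exact Units.ext (by
      rw [Units.val_pow_eq_pow_val, Units.val_pow_eq_pow_val]
      exact sub_eq_zero.mp h4)
  · exact absurd h4 hne

theorem cross_lt [Infinite k] {i i' j j' : ℕ} (hi : i ≠ 0) (hi' : i' ≠ 0)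
    (hlt : i' * j < i * j')
    (H : ∀ t : kˣ, ∃ s : kˣ, s ^ j = t ^ i ∧ s ^ j' = t ^ i') : False := by
  have hd : i * j' - i' * j ≠ 0 := Nat.sub_ne_zero_of_lt hlt
  have := units_pow_eq_one (k := k) (n := i * i' * (i * j' - i' * j)) (fun t => by
    obtain ⟨s, h1, h2⟩ := H t
    have e1 : s ^ (i * j') = t ^ (i * i') := by
      rw [mul_comm i j', pow_mul, h2, ← pow_mul, mul_comm i' i]
    have e2 : s ^ (i' * j) = t ^ (i * i') := by
      rw [mul_comm i' j, pow_mul, h1, ← pow_mul]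
    have e5 : s ^ (i * j' - i' * j) = 1 := by
      have e3 : s ^ (i' * j) * s ^ (i * j' - i' * j) = s ^ (i' * j) * 1 := by
        rw [mul_one, ← pow_add, Nat.add_sub_cancel' hlt.le, e1, e2]
      exact mul_left_cancel e3
    calc t ^ (i * i' * (i * j' - i' * j)) = (t ^ (i * i')) ^ (i * j' - i' * j) := pow_mul t _ _
      _ = (s ^ (i * j')) ^ (i * j' - i' * j) := by rw [e1]
      _ = (s ^ (i * j' - i' * j)) ^ (i * j') := by rw [← pow_mul, mul_comm, pow_mul]
      _ = 1 := by rw [e5, one_pow])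
  exact (mul_ne_zero (mul_ne_zero hi hi') hd) this

theorem cross_aux [Infinite k] {i i' j j' : ℕ} (hi : i ≠ 0) (hi' : i' ≠ 0)
    (H : ∀ t : kˣ, ∃ s : kˣ, s ^ j = t ^ i ∧ s ^ j' = t ^ i') : i' * j = i * j' := by
  rcases Nat.lt_trichotomy (i' * j) (i * j') with h | h | h
  · exact absurd h (fun h => cross_lt hi hi' h H)
  · exact h
  · exact absurd h (fun h => cross_lt hi' hi h (fun t => by
      obtain ⟨s, h1, h2⟩ := H t
      exact ⟨s, h2, h1⟩))

theorem map_ne_zero' (α : A ≃ₐ[k] A) {a : A} (ha : a ≠ 0) : α a ≠ 0 :=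
  fun h => ha (α.injective (by rw [h, map_zero]))

theorem deg_exists [Infinite k]
    (hnorm : ∀ α β : A ≃ₐ[k] A, InSubtorusN 𝒜 β → InSubtorusN 𝒜 (α * β * α⁻¹))
    (α : A ≃ₐ[k] A) {i : ℕ} {a : A} (ha : a ∈ 𝒜 i) (ha0 : a ≠ 0) (hi : i ≠ 0) :
    ∃ j, j ≠ 0 ∧ α a ∈ 𝒜 j := by
  have hαa : α a ≠ 0 := map_ne_zero' α ha0
  have hdne : decompose 𝒜 (α a) ≠ 0 := fun h => hαa
    ((LinearEquiv.map_eq_zero_iff (decomposeLinearEquiv 𝒜)).mp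
      (by rw [decomposeLinearEquiv_apply]; exact h))
  obtain ⟨j, hj⟩ := DFinsupp.ne_iff.mp hdne
  have hjc : (decompose 𝒜 (α a) j : A) ≠ 0 := by
    simpa using (fun h => hj (Subtype.ext (by simpa using h)))
  have hmem : α a ∈ 𝒜 j := by
    refine mem_of_decompose_eq_zero 𝒜 (fun j' hj' => ?_)
    by_contra hbj
    have hjj : j * i = j' * i → j = j' := fun h => Nat.eq_of_mul_eq_mul_right
      (Nat.pos_of_ne_zero hi) h
    have : i * j = i * j' := cross_aux (k := k) hi hi (fun t => by
      obtain ⟨s, hs⟩ := rel 𝒜 hnorm α t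
      exact ⟨s, hs i a ha j hjc, hs i a ha j' hbj⟩)
    exact hj' (Nat.eq_of_mul_eq_mul_left (Nat.pos_of_ne_zero hi) this).symm
  refine ⟨j, fun hj0 => ?_, hmem⟩
  subst hj0
  refine hi (units_pow_eq_one (k := k) (fun t => ?_))
  obtain ⟨s, hs⟩ := rel 𝒜 hnorm α t
  have := hs i a ha 0 hjc
  rw [pow_zero] at this
  exact this.symm

theorem deg_cross [Infinite k]
    (hnorm : ∀ α β : A ≃ₐ[k] A, InSubtorusN 𝒜 β → InSubtorusN 𝒜 (α * β * α⁻¹))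
    (α : A ≃ₐ[k] A) {i i' j j' : ℕ} {a b : A}
    (ha : a ∈ 𝒜 i) (ha0 : a ≠ 0) (hi : i ≠ 0) (hja : α a ∈ 𝒜 j)
    (hb : b ∈ 𝒜 i') (hb0 : b ≠ 0) (hi' : i' ≠ 0) (hjb : α b ∈ 𝒜 j') :
    i' * j = i * j' := by
  refine cross_aux (k := k) hi hi' (fun t => ?_)
  obtain ⟨s, hs⟩ := rel 𝒜 hnorm α t
  refine ⟨s, hs i a ha j ?_, hs i' b hb j' ?_⟩
  · rw [decompose_of_mem_same 𝒜 hja]; exact map_ne_zero' α ha0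
  · rw [decompose_of_mem_same 𝒜 hjb]; exact map_ne_zero' α hb0

theorem no_lt [Infinite k]
    (hnorm : ∀ α β : A ≃ₐ[k] A, InSubtorusN 𝒜 β → InSubtorusN 𝒜 (α * β * α⁻¹))
    (α : A ≃ₐ[k] A) {i j : ℕ} {a : A}
    (ha : a ∈ 𝒜 i) (ha0 : a ≠ 0) (hi : i ≠ 0) (hj : α a ∈ 𝒜 j) (hlt : j < i) : False := by
  have key : ∀ n : ℕ, ∃ (x : A) (p : ℕ), x ≠ 0 ∧ x ∈ 𝒜 p ∧ p ≠ 0 ∧ p + n ≤ i := by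
    intro n
    induction n with
    | zero => exact ⟨a, i, ha0, ha, hi, by omega⟩
    | succ n ih =>
      obtain ⟨x, p, hx0, hxp, hp0, hpn⟩ := ih
      obtain ⟨q, hq0, hq⟩ := deg_exists 𝒜 hnorm α hxp hx0 hp0
      have hrel : p * j = i * q := deg_cross 𝒜 hnorm α ha ha0 hi hj hxp hx0 hp0 hq
      have hqp : q < p := by
        have h1 : p * j < p * i := Nat.mul_lt_mul_of_pos_left hlt (Nat.pos_of_ne_zero hp0)
        have h2 : i * q < i * p := by rw [← hrel, mul_comm i p]; exact h1
        exact Nat.lt_of_mul_lt_mul_left h2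
      exact ⟨α x, q, map_ne_zero' α hx0, hq, hq0, by omega⟩
  obtain ⟨x, p, _, _, hp0, hpn⟩ := key i
  omega

theorem deg_eq [Infinite k]
    (hnorm : ∀ α β : A ≃ₐ[k] A, InSubtorusN 𝒜 β → InSubtorusN 𝒜 (α * β * α⁻¹))
    (α : A ≃ₐ[k] A) {i j : ℕ} {a : A}
    (ha : a ∈ 𝒜 i) (ha0 : a ≠ 0) (hi : i ≠ 0) (hj : α a ∈ 𝒜 j) : j = i := by
  rcases Nat.lt_trichotomy j i with h | h | h
  · exact absurd h (fun h => no_lt 𝒜 hnorm α ha ha0 hi hj h)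
  · exact h
  · exfalso
    have hj0 : j ≠ 0 := by omega
    have hinv : α⁻¹ (α a) ∈ 𝒜 i := by
      show α.symm (α a) ∈ 𝒜 i
      rwa [α.symm_apply_apply]
    exact no_lt 𝒜 hnorm α⁻¹ hj (map_ne_zero' α ha0) hj0 hinv h

theorem preserves_pos [Infinite k]
    (hnorm : ∀ α β : A ≃ₐ[k] A, InSubtorusN 𝒜 β → InSubtorusN 𝒜 (α * β * α⁻¹))
    (α : A ≃ₐ[k] A) {i : ℕ} {a : A} (ha : a ∈ 𝒜 i) (hi : i ≠ 0) : α a ∈ 𝒜 i := by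
  by_cases ha0 : a = 0
  · subst ha0; rw [map_zero]; exact (𝒜 i).zero_mem
  obtain ⟨j, hj0, hj⟩ := deg_exists 𝒜 hnorm α ha ha0 hi
  rwa [deg_eq 𝒜 hnorm α ha ha0 hi hj] at hj

theorem preserves_zero [Infinite k]
    (hnorm : ∀ α β : A ≃ₐ[k] A, InSubtorusN 𝒜 β → InSubtorusN 𝒜 (α * β * α⁻¹))
    (α : A ≃ₐ[k] A) {a : A} (ha : a ∈ 𝒜 0) : α a ∈ 𝒜 0 := by
  by_cases hA : ∀ m : ℕ, m ≠ 0 → ∀ c ∈ 𝒜 m, c = (0 : A)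
  · exact mem_of_decompose_eq_zero 𝒜 (fun j hj => hA j hj _ (SetLike.coe_mem _))
  · push_neg at hA
    obtain ⟨m, hm0, c, hc, hc0⟩ := hA
    have hαc : α c ∈ 𝒜 m := preserves_pos 𝒜 hnorm α hc hm0
    refine mem_of_decompose_eq_zero 𝒜 (fun j hj => ?_)
    by_contra hbj
    have hmj : m * j = 0 := units_pow_eq_one (k := k) (fun t => by
      obtain ⟨s, hs⟩ := rel 𝒜 hnorm α t
      have h1 : s ^ j = t ^ 0 := hs 0 a ha j hbj
      have h2 : s ^ m = t ^ m := hs m c hc m (by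
        rw [decompose_of_mem_same 𝒜 hαc]; exact map_ne_zero' α hc0)
      rw [pow_zero] at h1
      calc t ^ (m * j) = (t ^ m) ^ j := pow_mul t m j
        _ = (s ^ m) ^ j := by rw [h2]
        _ = (s ^ j) ^ m := by rw [← pow_mul, mul_comm, pow_mul]
        _ = 1 := by rw [h1, one_pow])
    exact (mul_ne_zero hm0 hj) hmj

theorem preserves [Infinite k]
    (hnorm : ∀ α β : A ≃ₐ[k] A, InSubtorusN 𝒜 β → InSubtorusN 𝒜 (α * β * α⁻¹))
    (α : A ≃ₐ[k] A) {i : ℕ} {a : A} (ha : a ∈ 𝒜 i) : α a ∈ 𝒜 i := by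
  rcases Nat.eq_zero_or_pos i with rfl | hi
  · exact preserves_zero 𝒜 hnorm α ha
  · exact preserves_pos 𝒜 hnorm α ha (by omega)

end Statement9Aux

/-- Corollary 2.15 (E2sd3...): let `k` be an infinite field and `A` a `k`-domain with an
`ℕ`-grading `𝒜`. If the subtorus `T(𝔤)` is a normal subgroup of `Aut_k(A)`, then
`Aut_k(A) = C(T(𝔤))`: every automorphism commutes with every element of `T(𝔤)`;
equivalently, every `k`-algebra automorphism of `A` preserves each graded piece `A_i`. -/
theorem statement_9 (k : Type) [Field k] [Infinite k]
    (A : Type) [CommRing A] [IsDomain A] [Algebra k A]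
    (𝒜 : ℕ → Submodule k A) [GradedAlgebra 𝒜]
    (hnorm : ∀ α β : A ≃ₐ[k] A, InSubtorusN 𝒜 β → InSubtorusN 𝒜 (α * β * α⁻¹)) :
    (∀ α β : A ≃ₐ[k] A, InSubtorusN 𝒜 β → α * β = β * α) ∧
    (∀ (α : A ≃ₐ[k] A) (i : ℕ), Submodule.map α.toLinearMap (𝒜 i) = 𝒜 i) := by
  constructor
  · rintro α β ⟨t, ht⟩
    refine AlgEquiv.ext fun x => ?_
    show α (β x) = β (α x)
    refine DirectSum.Decomposition.inductionOn 𝒜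
      (motive := fun x => α (β x) = β (α x)) (by simp) (fun {i} m => ?_)
      (fun u v hu hv => by simp only [map_add, hu, hv]) x
    show α (β (m : A)) = β (α (m : A))
    rw [ht i (m : A) m.2, map_smul,
      ht i (α (m : A)) (Statement9Aux.preserves 𝒜 hnorm α m.2)]
  · intro α i
    apply le_antisymm
    · rintro x hx
      obtain ⟨a, ha, rfl⟩ := Submodule.mem_map.mp hx
      exact Statement9Aux.preserves 𝒜 hnorm α ha
    · intro a ha
      refine Submodule.mem_map.mpr ⟨α.symm a, ?_, ?_⟩
      · have : (α⁻¹ : A ≃ₐ[k] A) a ∈ 𝒜 i := Statement9Aux.preserves 𝒜 hnorm α⁻¹ ha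
        exact this
      · exact α.apply_symm_apply a
end
end

section
/- Let k be an algebraically closed field of characteristic zero, B a rigid affine k-domain, and 𝔤 an ℕ-grading of B. If C(T(𝔤)) = T(𝔤), then Aut_k(B) = T(𝔤). -/
open MvPolynomial

set_option synthInstance.maxHeartbeats 400000
set_option maxHeartbeats 1000000

noncomputable section

/-- `D` is a locally nilpotent derivation: every element is killed by some power of `D`. -/
def IsLND {k B : Type*} [CommRing k] [CommRing B] [Algebra k B]
    (D : Derivation k B B) : Prop :=
  ∀ b : B, ∃ n : ℕ, (⇑D)^[n] b = 0

/-- `B` is rigid: its only locally nilpotent `k`-derivation is the zero derivation. -/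
def IsRigid (k B : Type*) [CommRing k] [CommRing B] [Algebra k B] : Prop :=
  ∀ D : Derivation k B B, IsLND D → D = 0

noncomputable section AuxB


open DirectSum

variable {k : Type} [Field k]
variable {B : Type} [CommRing B] [Algebra k B]
variable (𝒜 : ℕ → Submodule k B) [GradedAlgebra 𝒜]

/-- k-linear projection onto the degree-`i` part. -/
def gproj (i : ℕ) : B →ₗ[k] B where
  toFun b := (DirectSum.decompose 𝒜 b i : B)
  map_add' a b := by simp
  map_smul' c b := by
    simp only [DirectSum.decompose_smul, RingHom.id_apply]
    rfl

lemma gproj_apply (i : ℕ) (b : B) : gproj 𝒜 i b = (DirectSum.decompose 𝒜 b i : B) := rfl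

lemma gproj_mem (i : ℕ) (b : B) : gproj 𝒜 i b ∈ 𝒜 i := (DirectSum.decompose 𝒜 b i).2

lemma gproj_of_mem_same {i : ℕ} {b : B} (h : b ∈ 𝒜 i) : gproj 𝒜 i b = b :=
  DirectSum.decompose_of_mem_same 𝒜 h

lemma gproj_of_mem_ne {i j : ℕ} {b : B} (h : b ∈ 𝒜 i) (hij : i ≠ j) : gproj 𝒜 j b = 0 :=
  DirectSum.decompose_of_mem_ne 𝒜 h hij

open Classical in
lemma sum_gproj (b : B) :
    (∑ i ∈ (DirectSum.decompose 𝒜 b).support, gproj 𝒜 i b) = b :=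
  DirectSum.sum_support_decompose 𝒜 b

open Classical in
lemma gproj_eq_zero_of_not_mem_support {b : B} {i : ℕ}
    (h : i ∉ (DirectSum.decompose 𝒜 b).support) : gproj 𝒜 i b = 0 := by
  classical
  simpa [gproj_apply] using by
    have := DFinsupp.notMem_support_iff.mp h
    simp [this]

/-- projection for an integer index (zero for negative). -/
def gprojZ (n : ℤ) : B →ₗ[k] B := if 0 ≤ n then gproj 𝒜 n.toNat else 0

lemma gprojZ_ofNat (i : ℕ) : gprojZ 𝒜 (i : ℤ) = gproj 𝒜 i := by
  simp [gprojZ]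

lemma gprojZ_neg {n : ℤ} (h : n < 0) : gprojZ 𝒜 n = 0 := by
  simp [gprojZ, not_le.mpr h]

lemma gprojZ_mem {n : ℤ} {j : ℕ} (h : (j : ℤ) = n) (b : B) : gprojZ 𝒜 n b ∈ 𝒜 j := by
  subst h; rw [gprojZ_ofNat]; exact gproj_mem 𝒜 j b

lemma gproj_mul_homog {i : ℕ} {a : B} (ha : a ∈ 𝒜 i) (m : ℕ) (x : B) :
    gproj 𝒜 (i + m) (a * x) = a * gproj 𝒜 m x := by
  induction x using DirectSum.Decomposition.inductionOn 𝒜 with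
  | zero => simp
  | @homogeneous n x =>
    rcases eq_or_ne n m with rfl | hne
    · rw [gproj_of_mem_same 𝒜 (SetLike.mul_mem_graded ha x.2),
        gproj_of_mem_same 𝒜 x.2]
    · rw [gproj_of_mem_ne 𝒜 (SetLike.mul_mem_graded ha x.2) (by omega),
        gproj_of_mem_ne 𝒜 x.2 hne, mul_zero]
  | add x y hx hy => rw [mul_add, map_add, hx, hy, map_add, mul_add]

lemma gproj_mul_low {i m : ℕ} {a : B} (ha : a ∈ 𝒜 i) (hm : m < i) (x : B) :
    gproj 𝒜 m (a * x) = 0 := by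
  induction x using DirectSum.Decomposition.inductionOn 𝒜 with
  | zero => simp
  | @homogeneous n x =>
    exact gproj_of_mem_ne 𝒜 (SetLike.mul_mem_graded ha x.2) (by omega)
  | add x y hx hy => rw [mul_add, map_add, hx, hy, add_zero]

lemma gprojZ_mul_homog {i : ℕ} {a : B} (ha : a ∈ 𝒜 i) (n : ℤ) (x : B) :
    gprojZ 𝒜 ((i : ℤ) + n) (a * x) = a * gprojZ 𝒜 n x := by
  rcases le_or_gt 0 n with hn | hn
  · obtain ⟨m, rfl⟩ : ∃ m : ℕ, (m : ℤ) = n := ⟨n.toNat, Int.toNat_of_nonneg hn⟩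
    rw [show (i : ℤ) + (m : ℤ) = ((i + m : ℕ) : ℤ) by push_cast; ring,
      gprojZ_ofNat, gprojZ_ofNat, gproj_mul_homog 𝒜 ha]
  · rw [gprojZ_neg 𝒜 hn, LinearMap.zero_apply, mul_zero]
    rcases le_or_gt 0 ((i : ℤ) + n) with h2 | h2
    · obtain ⟨m, hm⟩ : ∃ m : ℕ, (m : ℤ) = (i : ℤ) + n := ⟨_, Int.toNat_of_nonneg h2⟩
      rw [← hm, gprojZ_ofNat]
      exact gproj_mul_low 𝒜 ha (by omega) x
    · rw [gprojZ_neg 𝒜 h2, LinearMap.zero_apply]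

/-- The Euler linear map of the grading: `a ↦ (i : k) • a` on `𝒜 i`. -/
def eulerFun : B →ₗ[k] B :=
  (DirectSum.toModule k ℕ B fun i => (i : k) • (𝒜 i).subtype) ∘ₗ
    (DirectSum.decomposeLinearEquiv 𝒜).toLinearMap

lemma eulerFun_of_mem {i : ℕ} {a : B} (ha : a ∈ 𝒜 i) :
    eulerFun 𝒜 a = (i : k) • a := by
  have : (DirectSum.decomposeLinearEquiv 𝒜).toLinearMap a
      = DirectSum.lof k ℕ (fun i => 𝒜 i) i ⟨a, ha⟩ := by
    simp only [LinearEquiv.coe_coe, DirectSum.decomposeLinearEquiv_apply,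
      DirectSum.decompose_of_mem 𝒜 ha]
    rfl
  rw [eulerFun, LinearMap.comp_apply, this, DirectSum.toModule_lof]
  rfl

/-- The Euler derivation of the grading. -/
def euler : Derivation k B B where
  toLinearMap := eulerFun 𝒜
  map_one_eq_zero' := by
    show eulerFun 𝒜 1 = 0
    rw [eulerFun_of_mem 𝒜 (SetLike.one_mem_graded 𝒜)]
    simp
  leibniz' a b := by
    show eulerFun 𝒜 (a * b) = a • eulerFun 𝒜 b + b • eulerFun 𝒜 a
    induction a using DirectSum.Decomposition.inductionOn 𝒜 with
    | zero => simp
    | @homogeneous i a =>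
      induction b using DirectSum.Decomposition.inductionOn 𝒜 with
      | zero => simp
      | @homogeneous j b =>
        rw [eulerFun_of_mem 𝒜 (SetLike.mul_mem_graded a.2 b.2),
          eulerFun_of_mem 𝒜 a.2, eulerFun_of_mem 𝒜 b.2]
        rw [smul_eq_mul, smul_eq_mul, mul_smul_comm, mul_smul_comm,
          mul_comm (b : B) (a : B), Nat.cast_add, add_smul]
        ring_nf
      | add x y hx hy =>
        rw [mul_add, map_add, hx, hy, map_add, smul_add]
        module
    | add x y hx hy =>
      rw [add_mul, map_add, hx, hy, map_add, smul_add]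
      module

lemma euler_of_mem {i : ℕ} {a : B} (ha : a ∈ 𝒜 i) :
    euler 𝒜 a = (i : k) • a := eulerFun_of_mem 𝒜 ha

/-- Conjugate of a derivation by an algebra automorphism. -/
def conjDer (α : B ≃ₐ[k] B) (D : Derivation k B B) : Derivation k B B where
  toLinearMap := α.toLinearMap ∘ₗ D.toLinearMap ∘ₗ α.symm.toLinearMap
  map_one_eq_zero' := by simp
  leibniz' a b := by
    simp only [LinearMap.toFun_eq_coe, LinearMap.comp_apply, AlgEquiv.toLinearMap_apply,
      map_mul, smul_eq_mul, map_add]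
    erw [Derivation.leibniz]
    simp [smul_eq_mul]

lemma conjDer_apply (α : B ≃ₐ[k] B) (D : Derivation k B B) (b : B) :
    conjDer α D b = α (D (α.symm b)) := rfl

/-- The degree-`d` graded component of a derivation. -/
def compFun (D : Derivation k B B) (d : ℤ) : B →ₗ[k] B :=
  (DirectSum.toModule k ℕ B fun i => gprojZ 𝒜 ((i : ℤ) + d) ∘ₗ D.toLinearMap ∘ₗ (𝒜 i).subtype) ∘ₗ
    (DirectSum.decomposeLinearEquiv 𝒜).toLinearMap

lemma compFun_of_mem (D : Derivation k B B) (d : ℤ) {i : ℕ} {a : B} (ha : a ∈ 𝒜 i) :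
    compFun 𝒜 D d a = gprojZ 𝒜 ((i : ℤ) + d) (D a) := by
  have : (DirectSum.decomposeLinearEquiv 𝒜).toLinearMap a
      = DirectSum.lof k ℕ (fun i => 𝒜 i) i ⟨a, ha⟩ := by
    simp only [LinearEquiv.coe_coe, DirectSum.decomposeLinearEquiv_apply,
      DirectSum.decompose_of_mem 𝒜 ha]
    rfl
  rw [compFun, LinearMap.comp_apply, this, DirectSum.toModule_lof]
  rfl

/-- The degree-`d` graded component of a derivation, as a derivation. -/
def compDer (D : Derivation k B B) (d : ℤ) : Derivation k B B where
  toLinearMap := compFun 𝒜 D d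
  map_one_eq_zero' := by
    show compFun 𝒜 D d 1 = 0
    rw [compFun_of_mem 𝒜 D d (SetLike.one_mem_graded 𝒜)]
    simp
  leibniz' a b := by
    show compFun 𝒜 D d (a * b) = a • compFun 𝒜 D d b + b • compFun 𝒜 D d a
    induction a using DirectSum.Decomposition.inductionOn 𝒜 with
    | zero => simp
    | @homogeneous i a =>
      induction b using DirectSum.Decomposition.inductionOn 𝒜 with
      | zero => simp
      | @homogeneous j b =>
        rw [compFun_of_mem 𝒜 D d (SetLike.mul_mem_graded a.2 b.2),
          compFun_of_mem 𝒜 D d a.2, compFun_of_mem 𝒜 D d b.2,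
          Derivation.leibniz, map_add, smul_eq_mul, smul_eq_mul, smul_eq_mul, smul_eq_mul]
        rw [show ((i + j : ℕ) : ℤ) + d = (i : ℤ) + ((j : ℤ) + d) by push_cast; ring,
          gprojZ_mul_homog 𝒜 a.2]
        congr 1
        rw [show (i : ℤ) + ((j : ℤ) + d) = (j : ℤ) + ((i : ℤ) + d) by ring,
          gprojZ_mul_homog 𝒜 b.2]
      | add x y hx hy =>
        rw [mul_add, map_add, hx, hy, map_add, smul_add]
        module
    | add x y hx hy =>
      rw [add_mul, map_add, hx, hy, map_add, smul_add]
      module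

lemma compDer_of_mem (D : Derivation k B B) (d : ℤ) {i : ℕ} {a : B} (ha : a ∈ 𝒜 i) :
    compDer 𝒜 D d a = gprojZ 𝒜 ((i : ℤ) + d) (D a) := compFun_of_mem 𝒜 D d ha

/-- If all components of `D` of nonzero degree vanish, `D` preserves the grading. -/
lemma deg_preserving (D : Derivation k B B)
    (h : ∀ d : ℤ, d ≠ 0 → compDer 𝒜 D d = 0) {i : ℕ} {a : B} (ha : a ∈ 𝒜 i) :
    D a ∈ 𝒜 i := by
  classical
  have key : ∀ m : ℕ, m ≠ i → gproj 𝒜 m (D a) = 0 := by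
    intro m hm
    have h0 := h ((m : ℤ) - i) (by omega)
    have := compDer_of_mem 𝒜 D ((m : ℤ) - i) ha
    rw [h0] at this
    rw [show (i : ℤ) + ((m : ℤ) - i) = (m : ℤ) by ring, gprojZ_ofNat] at this
    simpa using this.symm
  have : D a = gproj 𝒜 i (D a) := by
    conv_lhs => rw [← sum_gproj 𝒜 (D a)]
    rw [Finset.sum_eq_single i (fun m _ hm => key m hm)
      (fun hi => (gproj_eq_zero_of_not_mem_support 𝒜 hi))]
  rw [this]; exact gproj_mem 𝒜 i (D a)


open DirectSum

variable {k : Type} [Field k]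
variable {B : Type} [CommRing B] [Algebra k B]
variable (𝒜 : ℕ → Submodule k B) [GradedAlgebra 𝒜]

/-- Zero iterate criterion extends upward. -/
lemma iterate_zero_le (f : Derivation k B B) {b : B} {n m : ℕ} (hnm : n ≤ m)
    (h : (⇑f)^[n] b = 0) : (⇑f)^[m] b = 0 := by
  obtain ⟨p, rfl⟩ := Nat.exists_eq_add_of_le hnm
  rw [add_comm, Function.iterate_add_apply, h, iterate_map_zero]

lemma isLND_aux (f : Derivation k B B)
    (h : ∀ i : ℕ, ∀ b ∈ 𝒜 i, ∃ n, (⇑f)^[n] b = 0) : IsLND f := by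
  intro b
  induction b using DirectSum.Decomposition.inductionOn 𝒜 with
  | zero => exact ⟨0, rfl⟩
  | @homogeneous i x => exact h i x x.2
  | add x y hx hy =>
    obtain ⟨n, hn⟩ := hx
    obtain ⟨m, hm⟩ := hy
    refine ⟨max n m, ?_⟩
    rw [iterate_map_add]
    rw [iterate_zero_le f (le_max_left n m) hn, iterate_zero_le f (le_max_right n m) hm,
      add_zero]

/-- Homogeneous elements are mapped by a graded component to homogeneous elements (or zero). -/
lemma compDer_mem_or_zero (D : Derivation k B B) (d : ℤ) {i : ℕ} {b : B} (hb : b ∈ 𝒜 i) :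
    (∃ j : ℕ, (j : ℤ) = (i : ℤ) + d ∧ compDer 𝒜 D d b ∈ 𝒜 j) ∨ compDer 𝒜 D d b = 0 := by
  rcases le_or_gt 0 ((i : ℤ) + d) with h | h
  · exact Or.inl ⟨((i : ℤ) + d).toNat, Int.toNat_of_nonneg h, by
      rw [compDer_of_mem 𝒜 D d hb]; exact gprojZ_mem 𝒜 (Int.toNat_of_nonneg h) _⟩
  · exact Or.inr (by rw [compDer_of_mem 𝒜 D d hb, gprojZ_neg 𝒜 h, LinearMap.zero_apply])

/-- Negative-degree components of any derivation are locally nilpotent. -/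
lemma compDer_isLND_of_neg (D : Derivation k B B) {d : ℤ} (hd : d < 0) :
    IsLND (compDer 𝒜 D d) := by
  apply isLND_aux 𝒜
  intro i b hb
  refine ⟨i + 1, ?_⟩
  -- iterates stay homogeneous of decreasing degree, eventually vanish
  have main : ∀ n : ℕ, (⇑(compDer 𝒜 D d))^[n] b = 0 ∨
      ∃ j : ℕ, (j : ℤ) ≤ (i : ℤ) + n * d ∧ (⇑(compDer 𝒜 D d))^[n] b ∈ 𝒜 j := by
    intro n
    induction n with
    | zero => exact Or.inr ⟨i, by simp, hb⟩
    | succ n ih =>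
      rw [Function.iterate_succ_apply']
      rcases ih with h0 | ⟨j, hj, hmem⟩
      · left; rw [h0]; exact map_zero _
      · rcases compDer_mem_or_zero 𝒜 D d hmem with ⟨j', hj', hmem'⟩ | h0
        · right
          refine ⟨j', ?_, hmem'⟩
          have hr : ((n : ℤ) + 1) * d = (n : ℤ) * d + d := by ring
          push_cast at hj' ⊢
          omega
        · exact Or.inl h0
  rcases main (i + 1) with h0 | ⟨j, hj, _⟩
  · exact h0
  · exfalso
    have h1 : (0 : ℤ) ≤ j := Int.ofNat_nonneg j
    have h2 : (i : ℤ) + ((i : ℤ) + 1) * d < 0 := by nlinarith [Int.ofNat_nonneg i]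
    push_cast at hj
    omega

open Classical in
/-- An upper bound for the degrees occurring in `x`. -/
def degBound (x : B) : ℕ := (DirectSum.decompose 𝒜 x).support.sup id

open Classical in
lemma gproj_eq_zero_of_degBound_lt {x : B} {m : ℕ} (h : degBound 𝒜 x < m) :
    gproj 𝒜 m x = 0 := by
  apply gproj_eq_zero_of_not_mem_support
  intro hm
  have := Finset.le_sup (f := id) hm
  simp only [id] at this
  simp only [degBound] at h
  omega

lemma gprojZ_eq_zero_of_degBound_lt {x : B} {n : ℤ} (h : (degBound 𝒜 x : ℤ) < n) :
    gprojZ 𝒜 n x = 0 := by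
  obtain ⟨m, rfl⟩ : ∃ m : ℕ, (m : ℤ) = n := ⟨n.toNat, Int.toNat_of_nonneg (by omega)⟩
  rw [gprojZ_ofNat]
  exact gproj_eq_zero_of_degBound_lt 𝒜 (by exact_mod_cast h)

open Classical in
lemma gproj_ne_zero_of_mem_support {x : B} {m : ℕ}
    (hm : m ∈ (DirectSum.decompose 𝒜 x).support) : gproj 𝒜 m x ≠ 0 := by
  have := DFinsupp.mem_support_iff.mp hm
  intro h0
  exact this (Subtype.ext h0)

/-- All graded components of a derivation of sufficiently large degree vanish. -/
lemma exists_bound (haff : Algebra.FiniteType k B) (D : Derivation k B B) :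
    ∃ N : ℕ, ∀ d : ℤ, (N : ℤ) < d → compDer 𝒜 D d = 0 := by
  classical
  obtain ⟨s, hs⟩ := haff.out
  set s' : Finset B :=
    s.biUnion (fun g => (DirectSum.decompose 𝒜 g).support.image fun i => gproj 𝒜 i g) with hs'
  have hadj : Algebra.adjoin k (↑s' : Set B) = ⊤ := by
    rw [eq_top_iff, ← hs]
    rw [Algebra.adjoin_le_iff]
    intro g hg
    rw [← sum_gproj 𝒜 g]
    apply Subalgebra.sum_mem
    intro i hi
    apply Algebra.subset_adjoin
    simp only [hs', Finset.coe_biUnion, Set.mem_iUnion, Finset.coe_image, Set.mem_image]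
    exact ⟨g, hg, i, hi, rfl⟩
  refine ⟨s'.sup fun x => degBound 𝒜 (D x), ?_⟩
  intro d hd
  apply Derivation.ext_of_adjoin_eq_top (↑s' : Set B) hadj
  intro x hx
  have hx' : x ∈ s' := hx
  simp only [hs', Finset.mem_biUnion, Finset.mem_image] at hx'
  obtain ⟨g, hg, i, hi, rfl⟩ := hx'
  show compDer 𝒜 D d (gproj 𝒜 i g) = (0 : Derivation k B B) (gproj 𝒜 i g)
  rw [compDer_of_mem 𝒜 D d (gproj_mem 𝒜 i g)]
  have hle : degBound 𝒜 (D (gproj 𝒜 i g)) ≤ s'.sup fun x => degBound 𝒜 (D x) := by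
    apply Finset.le_sup (f := fun x => degBound 𝒜 (D x))
    simp only [hs', Finset.mem_biUnion, Finset.mem_image]
    exact ⟨g, hg, i, hi, rfl⟩
  rw [gprojZ_eq_zero_of_degBound_lt 𝒜 (by push_cast; omega)]
  simp

variable {𝒜} in
lemma conj_euler_eigen (α : B ≃ₐ[k] B) {j : ℕ} {c : B} (hc : c ∈ 𝒜 j) :
    conjDer α (euler 𝒜) (α c) = (j : k) • α c := by
  rw [conjDer_apply, AlgEquiv.symm_apply_apply, euler_of_mem 𝒜 hc, map_smul]

open Classical in
lemma sum_vcomp (α : B ≃ₐ[k] B) (b : B) :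
    (∑ j ∈ (DirectSum.decompose 𝒜 (α.symm b)).support, α (gproj 𝒜 j (α.symm b))) = b := by
  rw [← map_sum, sum_gproj 𝒜 (α.symm b), AlgEquiv.apply_symm_apply]

open Classical in
lemma iter_conj_euler (α : B ≃ₐ[k] B) (b : B) (n : ℕ) :
    (⇑(conjDer α (euler 𝒜)))^[n] b =
      ∑ j ∈ (DirectSum.decompose 𝒜 (α.symm b)).support,
        ((j : k) ^ n) • α (gproj 𝒜 j (α.symm b)) := by
  induction n with
  | zero => simp [sum_vcomp 𝒜 α b]
  | succ n ih =>
    rw [Function.iterate_succ_apply', ih, map_sum]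
    apply Finset.sum_congr rfl
    intro j _
    rw [Derivation.map_smul, conj_euler_eigen α (gproj_mem 𝒜 j (α.symm b)),
      smul_smul, pow_succ, mul_comm]

open Classical in
lemma locfin (α : B ≃ₐ[k] B) (b : B) :
    ∃ M : ℕ, ∀ n m : ℕ, M < m → gproj 𝒜 m ((⇑(conjDer α (euler 𝒜)))^[n] b) = 0 := by
  refine ⟨(DirectSum.decompose 𝒜 (α.symm b)).support.sup
    (fun j => degBound 𝒜 (α (gproj 𝒜 j (α.symm b)))), ?_⟩
  intro n m hm
  rw [iter_conj_euler 𝒜 α b n, map_sum]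
  apply Finset.sum_eq_zero
  intro j hj
  rw [map_smul, gproj_eq_zero_of_degBound_lt 𝒜
    (lt_of_le_of_lt (Finset.le_sup (f := fun j => degBound 𝒜 (α (gproj 𝒜 j (α.symm b)))) hj) hm),
    smul_zero]

open Classical in
lemma support_le_of_gproj_zero {x : B} {Nb : ℕ} (hx : ∀ m : ℕ, Nb < m → gproj 𝒜 m x = 0)
    {m' : ℕ} (hm' : m' ∈ (DirectSum.decompose 𝒜 x).support) : m' ≤ Nb := by
  by_contra h
  exact gproj_ne_zero_of_mem_support 𝒜 hm' (hx m' (by omega))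

/-- Key step: if all components of `E'` of degree `> d` vanish, applying `E'` raises the
degree bound by at most `d`, with top part given by the degree-`d` component. -/
lemma degE (D : Derivation k B B) {dn : ℕ}
    (htop : ∀ e : ℤ, (dn : ℤ) < e → compDer 𝒜 D e = 0)
    (x : B) (Nb : ℕ) (hx : ∀ m : ℕ, Nb < m → gproj 𝒜 m x = 0) :
    (∀ m : ℕ, Nb + dn < m → gproj 𝒜 m (D x) = 0) ∧
      gproj 𝒜 (Nb + dn) (D x) = compDer 𝒜 D (dn : ℤ) (gproj 𝒜 Nb x) := by
  classical
  have hterm : ∀ (m m' : ℕ), m' ≤ Nb → ((m' : ℤ) + dn < (m : ℤ)) →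
      gproj 𝒜 m (D (gproj 𝒜 m' x)) = 0 := by
    intro m m' _ hlt
    have h1 : gproj 𝒜 m (D (gproj 𝒜 m' x))
        = compDer 𝒜 D ((m : ℤ) - (m' : ℤ)) (gproj 𝒜 m' x) := by
      rw [compDer_of_mem 𝒜 D _ (gproj_mem 𝒜 m' x),
        show (m' : ℤ) + ((m : ℤ) - (m' : ℤ)) = (m : ℤ) by ring, gprojZ_ofNat]
    rw [h1, htop ((m : ℤ) - (m' : ℤ)) (by omega)]
    simp
  have hDx : D x = ∑ m' ∈ (DirectSum.decompose 𝒜 x).support, D (gproj 𝒜 m' x) := by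
    conv_lhs => rw [← sum_gproj 𝒜 x]
    rw [map_sum]
  constructor
  · intro m hm
    rw [hDx, map_sum]
    apply Finset.sum_eq_zero
    intro m' hm'
    have := support_le_of_gproj_zero 𝒜 hx hm'
    exact hterm m m' this (by push_cast; omega)
  · rw [hDx, map_sum]
    rw [Finset.sum_eq_single Nb]
    · rw [compDer_of_mem 𝒜 D _ (gproj_mem 𝒜 Nb x),
        show (Nb : ℤ) + (dn : ℤ) = ((Nb + dn : ℕ) : ℤ) by push_cast; ring, gprojZ_ofNat]
    · intro m' hm' hne
      have := support_le_of_gproj_zero 𝒜 hx hm'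
      exact hterm (Nb + dn) m' this (by push_cast; omega)
    · intro hNb
      rw [gproj_eq_zero_of_not_mem_support 𝒜 hNb]
      simp

lemma compDer_top_isLND (α : B ≃ₐ[k] B) {dn : ℕ} (hd0 : 0 < dn)
    (htop : ∀ e : ℤ, (dn : ℤ) < e → compDer 𝒜 (conjDer α (euler 𝒜)) e = 0) :
    IsLND (compDer 𝒜 (conjDer α (euler 𝒜)) (dn : ℤ)) := by
  classical
  set E' := conjDer α (euler 𝒜) with hE'
  set U := compDer 𝒜 E' (dn : ℤ) with hU
  apply isLND_aux 𝒜
  intro i b hb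
  obtain ⟨M, hM⟩ := locfin 𝒜 α b
  have claim : ∀ n : ℕ,
      (∀ m : ℕ, i + n * dn < m → gproj 𝒜 m ((⇑E')^[n] b) = 0) ∧
      (⇑U)^[n] b = gproj 𝒜 (i + n * dn) ((⇑E')^[n] b) := by
    intro n
    induction n with
    | zero =>
      refine ⟨fun m hm => gproj_of_mem_ne 𝒜 hb (by omega), ?_⟩
      simp only [Function.iterate_zero_apply, Nat.zero_mul, Nat.add_zero]
      exact (gproj_of_mem_same 𝒜 hb).symm
    | succ n ih =>
      obtain ⟨ih1, ih2⟩ := ih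
      have hstep := degE 𝒜 E' htop ((⇑E')^[n] b) (i + n * dn) ih1
      have harith : (n + 1) * dn = n * dn + dn := by ring
      constructor
      · intro m hm
        rw [Function.iterate_succ_apply']
        apply hstep.1
        omega
      · rw [Function.iterate_succ_apply', Function.iterate_succ_apply',
          show i + (n + 1) * dn = i + n * dn + dn by omega, hstep.2, ih2]
  refine ⟨M + 1, ?_⟩
  rw [(claim (M + 1)).2]
  apply hM
  nlinarith
/-- In a rigid finitely generated algebra, every nonzero-degree component of the conjugated
Euler derivation vanishes. -/
lemma comps_vanish (haff : Algebra.FiniteType k B) (hrigid : IsRigid k B)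
    (α : B ≃ₐ[k] B) : ∀ d : ℤ, d ≠ 0 → compDer 𝒜 (conjDer α (euler 𝒜)) d = 0 := by
  have hneg : ∀ d : ℤ, d < 0 → compDer 𝒜 (conjDer α (euler 𝒜)) d = 0 := fun d hd =>
    hrigid _ (compDer_isLND_of_neg 𝒜 _ hd)
  obtain ⟨N, hN⟩ := exists_bound 𝒜 haff (conjDer α (euler 𝒜))
  have Q : ∀ m : ℕ, ∀ d : ℤ, 0 < d → (N : ℤ) + 1 - m ≤ d →
      compDer 𝒜 (conjDer α (euler 𝒜)) d = 0 := by
    intro m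
    induction m with
    | zero => exact fun d hd hge => hN d (by omega)
    | succ m ih =>
      intro d hd hge
      obtain ⟨dn, rfl⟩ : ∃ dn : ℕ, (dn : ℤ) = d := ⟨d.toNat, Int.toNat_of_nonneg hd.le⟩
      apply hrigid
      apply compDer_top_isLND 𝒜 α (by exact_mod_cast hd)
      intro e he
      rcases lt_or_ge (N : ℤ) e with h | h
      · exact hN e h
      · exact ih e (by omega) (by omega)
  intro d hd
  rcases lt_or_ge d 0 with h | h
  · exact hneg d h
  · exact Q (N + 1) d (by omega) (by omega)

/-- Eigenvector decomposition: if a sum of eigenvectors of `f` with distinct natural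
eigenvalues lies in an `f`-invariant submodule, so does each eigenvector. -/
lemma eigen_split [CharZero k] (f : B →ₗ[k] B) (W : Submodule k B)
    (hW : ∀ x ∈ W, f x ∈ W) :
    ∀ (F : Finset ℕ) (v : ℕ → B), (∀ j ∈ F, f (v j) = (j : k) • v j) →
      (∑ j ∈ F, v j) ∈ W → ∀ j ∈ F, v j ∈ W := by
  classical
  intro F
  induction F using Finset.induction_on with
  | empty => intro v _ _ j hj; simp at hj
  | @insert j₀ F' hj₀ ih =>
    intro v hv hsum
    rw [Finset.sum_insert hj₀] at hsum
    have hfa : f (v j₀ + ∑ j ∈ F', v j) ∈ W := hW _ hsum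
    have hya : f (v j₀ + ∑ j ∈ F', v j) - (j₀ : k) • (v j₀ + ∑ j ∈ F', v j) ∈ W :=
      Submodule.sub_mem W hfa (Submodule.smul_mem W _ hsum)
    have hyeq : f (v j₀ + ∑ j ∈ F', v j) - (j₀ : k) • (v j₀ + ∑ j ∈ F', v j)
        = ∑ j ∈ F', (((j : k) - (j₀ : k)) • v j) := by
      rw [map_add, map_sum, smul_add, Finset.smul_sum, hv j₀ (Finset.mem_insert_self j₀ F'),
        show ∀ x y u w : B, x + y - (u + w) = (x - u) + (y - w) from fun x y u w => by abel,
        sub_self, zero_add, ← Finset.sum_sub_distrib]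
      exact Finset.sum_congr rfl fun j hj => by
        rw [hv j (Finset.mem_insert_of_mem hj), sub_smul]
    have hw : ∀ j ∈ F', ((j : k) - (j₀ : k)) • v j ∈ W := by
      apply ih (fun j => ((j : k) - (j₀ : k)) • v j)
      · intro j hj
        rw [map_smul, hv j (Finset.mem_insert_of_mem hj), smul_smul, smul_smul, mul_comm]
      · rw [← hyeq]; exact hya
    have hvF' : ∀ j ∈ F', v j ∈ W := by
      intro j hj
      have hne : (j : k) - (j₀ : k) ≠ 0 := by
        have hjj : j ≠ j₀ := fun h => hj₀ (h ▸ hj)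
        intro h0
        exact hjj (Nat.cast_inj.mp (sub_eq_zero.mp h0))
      have := Submodule.smul_mem W ((j : k) - (j₀ : k))⁻¹ (hw j hj)
      rwa [smul_smul, inv_mul_cancel₀ hne, one_smul] at this
    intro j hj
    rcases Finset.mem_insert.mp hj with rfl | hj'
    · have hvj : v j = (v j + ∑ j' ∈ F', v j') - ∑ j' ∈ F', v j' := by abel
      rw [hvj]
      exact Submodule.sub_mem W hsum (Submodule.sum_mem W hvF')
    · exact hvF' j hj'

/-- KEY: for any automorphism `α` of a rigid affine graded algebra, the `α`-twisted
homogeneous components of a homogeneous element are homogeneous of the same degree. -/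
lemma key [CharZero k] (haff : Algebra.FiniteType k B) (hrigid : IsRigid k B)
    (α : B ≃ₐ[k] B) {i : ℕ} {a : B} (ha : a ∈ 𝒜 i) (j : ℕ) :
    α (gproj 𝒜 j (α.symm a)) ∈ 𝒜 i := by
  classical
  set E' := conjDer α (euler 𝒜) with hE'
  have hdp : ∀ x ∈ 𝒜 i, E' x ∈ 𝒜 i := fun x hx =>
    deg_preserving 𝒜 E' (comps_vanish 𝒜 haff hrigid α) hx
  have := eigen_split E'.toLinearMap (𝒜 i) hdp
    (DirectSum.decompose 𝒜 (α.symm a)).support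
    (fun j => α (gproj 𝒜 j (α.symm a)))
    (fun j _ => conj_euler_eigen α (gproj_mem 𝒜 j (α.symm a)))
    (by rw [sum_vcomp 𝒜 α a]; exact ha)
  by_cases hj : j ∈ (DirectSum.decompose 𝒜 (α.symm a)).support
  · exact this j hj
  · rw [gproj_eq_zero_of_not_mem_support 𝒜 hj, map_zero]
    exact Submodule.zero_mem _
/-- The linear map underlying the torus automorphism `a ↦ tⁱ • a` on `𝒜 i`. -/
def tmapFun (t : k) : B →ₗ[k] B :=
  (DirectSum.toModule k ℕ B fun i => (t ^ i) • (𝒜 i).subtype) ∘ₗ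
    (DirectSum.decomposeLinearEquiv 𝒜).toLinearMap

lemma tmapFun_of_mem {t : k} {i : ℕ} {a : B} (ha : a ∈ 𝒜 i) :
    tmapFun 𝒜 t a = t ^ i • a := by
  have : (DirectSum.decomposeLinearEquiv 𝒜).toLinearMap a
      = DirectSum.lof k ℕ (fun i => 𝒜 i) i ⟨a, ha⟩ := by
    simp only [LinearEquiv.coe_coe, DirectSum.decomposeLinearEquiv_apply,
      DirectSum.decompose_of_mem 𝒜 ha]
    rfl
  rw [tmapFun, LinearMap.comp_apply, this, DirectSum.toModule_lof]
  rfl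

lemma tmapFun_mul (t : k) (a b : B) :
    tmapFun 𝒜 t (a * b) = tmapFun 𝒜 t a * tmapFun 𝒜 t b := by
  induction a using DirectSum.Decomposition.inductionOn 𝒜 with
  | zero => simp
  | @homogeneous i a =>
    induction b using DirectSum.Decomposition.inductionOn 𝒜 with
    | zero => simp
    | @homogeneous j b =>
      rw [tmapFun_of_mem 𝒜 (SetLike.mul_mem_graded a.2 b.2), tmapFun_of_mem 𝒜 a.2,
        tmapFun_of_mem 𝒜 b.2, smul_mul_smul_comm, pow_add]
    | add x y hx hy => rw [mul_add, map_add, hx, hy, map_add, mul_add]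
  | add x y hx hy => rw [add_mul, map_add, hx, hy, map_add, add_mul]

lemma tmapFun_comp (t s : k) (a : B) :
    tmapFun 𝒜 t (tmapFun 𝒜 s a) = tmapFun 𝒜 (t * s) a := by
  induction a using DirectSum.Decomposition.inductionOn 𝒜 with
  | zero => simp
  | @homogeneous i a =>
    rw [tmapFun_of_mem 𝒜 a.2, map_smul, tmapFun_of_mem 𝒜 a.2, tmapFun_of_mem 𝒜 a.2,
      smul_smul, mul_pow, mul_comm]
  | add x y hx hy => rw [map_add, map_add, hx, hy, map_add]

lemma tmapFun_one_eq (a : B) : tmapFun 𝒜 1 a = a := by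
  induction a using DirectSum.Decomposition.inductionOn 𝒜 with
  | zero => simp
  | @homogeneous i a => rw [tmapFun_of_mem 𝒜 a.2, one_pow, one_smul]
  | add x y hx hy => rw [map_add, hx, hy]

/-- The torus automorphism associated to `t : kˣ`. -/
def tAut (t : kˣ) : B ≃ₐ[k] B where
  toFun := tmapFun 𝒜 (t : k)
  invFun := tmapFun 𝒜 ((t⁻¹ : kˣ) : k)
  left_inv a := by rw [tmapFun_comp, Units.inv_mul, tmapFun_one_eq]
  right_inv a := by rw [tmapFun_comp, Units.mul_inv, tmapFun_one_eq]
  map_mul' := tmapFun_mul 𝒜 (t : k)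
  map_add' := map_add _
  commutes' c := by
    have h1 : algebraMap k B c ∈ 𝒜 0 := by
      rw [Algebra.algebraMap_eq_smul_one]
      exact Submodule.smul_mem _ c (SetLike.one_mem_graded 𝒜)
    show tmapFun 𝒜 (t : k) (algebraMap k B c) = algebraMap k B c
    rw [tmapFun_of_mem 𝒜 h1, pow_zero, one_smul]

lemma tAut_inSubtorus (t : kˣ) : InSubtorusN 𝒜 (tAut 𝒜 t) :=
  ⟨t, fun _ _ ha => tmapFun_of_mem 𝒜 ha⟩

open Classical in
/-- Extensionality on `α`-bihomogeneous elements. -/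
lemma ext_bihomog [CharZero k] (haff : Algebra.FiniteType k B) (hrigid : IsRigid k B)
    (α : B ≃ₐ[k] B) (φ ψ : B ≃ₐ[k] B)
    (h : ∀ (i j : ℕ) (a : B), a ∈ 𝒜 i → α.symm a ∈ 𝒜 j → φ a = ψ a) : φ = ψ := by
  have hx : ∀ (i : ℕ) (x : B), x ∈ 𝒜 i → φ x = ψ x := by
    intro i x hxi
    have hxe : x = ∑ j ∈ (DirectSum.decompose 𝒜 (α.symm x)).support,
        α (gproj 𝒜 j (α.symm x)) := (sum_vcomp 𝒜 α x).symm
    rw [hxe, map_sum, map_sum]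
    exact Finset.sum_congr rfl fun j _ => h i j _ (key 𝒜 haff hrigid α hxi j)
      (by rw [AlgEquiv.symm_apply_apply]; exact gproj_mem 𝒜 j (α.symm x))
  apply AlgEquiv.ext
  intro b
  conv_lhs => rw [← sum_gproj 𝒜 b]
  conv_rhs => rw [← sum_gproj 𝒜 b]
  rw [map_sum, map_sum]
  exact Finset.sum_congr rfl fun i _ => hx i _ (gproj_mem 𝒜 i b)

/-- The set of bidegrees appearing for `α`. -/
def Pprop (α : B ≃ₐ[k] B) (i j : ℕ) : Prop :=
  ∃ a : B, a ≠ 0 ∧ a ∈ 𝒜 i ∧ α.symm a ∈ 𝒜 j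

lemma pprop_symm {α : B ≃ₐ[k] B} {i j : ℕ} (h : Pprop 𝒜 α.symm i j) : Pprop 𝒜 α j i := by
  obtain ⟨a, ha0, hai, haj⟩ := h
  rw [AlgEquiv.symm_symm] at haj
  refine ⟨α a, fun h0 => ha0 (by simpa using congrArg α.symm h0), haj, ?_⟩
  rw [AlgEquiv.symm_apply_apply]; exact hai

/-- Computation of the conjugated torus element on bihomogeneous elements. -/
lemma conj_tAut_apply {α β : B ≃ₐ[k] B} {t : kˣ}
    (hβ : ∀ (i : ℕ) (a : B), a ∈ 𝒜 i → β a = ((t : k) ^ i) • a)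
    {j : ℕ} {a : B} (haj : α.symm a ∈ 𝒜 j) :
    (α * β * α⁻¹) a = ((t : k) ^ j) • a := by
  have : (α * β * α⁻¹) a = α (β (α.symm a)) := rfl
  rw [this, hβ j _ haj, map_smul, AlgEquiv.apply_symm_apply]

/-- Scalars acting equally on a nonzero vector coincide. -/
lemma smul_cancel {c d : k} {a : B} (ha : a ≠ 0) (h : c • a = d • a) : c = d := by
  by_contra hne
  have h1 : (c - d) • a = 0 := by rw [sub_smul, h, sub_self]
  have h2 : a = 0 := by
    have := congrArg (fun x => (c - d)⁻¹ • x) h1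
    simpa [smul_smul, inv_mul_cancel₀ (sub_ne_zero.mpr hne)] using this
  exact ha h2
section WithCT

variable [CharZero k] (haff : Algebra.FiniteType k B) (hrigid : IsRigid k B)
variable (hCT : ∀ α : B ≃ₐ[k] B,
      (∀ β : B ≃ₐ[k] B, InSubtorusN 𝒜 β → α * β = β * α) ↔ InSubtorusN 𝒜 α)

include haff hrigid hCT

/-- Every conjugate of a torus element by any automorphism is again a torus element,
yielding the exponent relation on bidegrees. -/
lemma hP (α : B ≃ₐ[k] B) (t : kˣ) :
    ∃ u : kˣ, ∀ i j : ℕ, Pprop 𝒜 α i j → (t : k) ^ j = (u : k) ^ i := by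
  set β := tAut 𝒜 t with hβdef
  have hβ : ∀ (i : ℕ) (a : B), a ∈ 𝒜 i → β a = ((t : k) ^ i) • a :=
    fun _ _ ha => tmapFun_of_mem 𝒜 ha
  -- the conjugate commutes with every torus element
  have hcomm : ∀ δ : B ≃ₐ[k] B, InSubtorusN 𝒜 δ → (α * β * α⁻¹) * δ = δ * (α * β * α⁻¹) := by
    intro δ hδ
    obtain ⟨u, hu⟩ := hδ
    apply ext_bihomog 𝒜 haff hrigid α
    intro i j a hai haj
    have h1 : ((α * β * α⁻¹) * δ) a = (α * β * α⁻¹) (δ a) := rfl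
    have h2 : (δ * (α * β * α⁻¹)) a = δ ((α * β * α⁻¹) a) := rfl
    rw [h1, h2, hu i a hai, conj_tAut_apply 𝒜 hβ haj, map_smul, map_smul,
      conj_tAut_apply 𝒜 hβ haj, hu i a hai, smul_comm]
  obtain ⟨u, hu⟩ := (hCT (α * β * α⁻¹)).mp hcomm
  refine ⟨u, ?_⟩
  rintro i j ⟨a, ha0, hai, haj⟩
  exact smul_cancel (ha := ha0) (by rw [← conj_tAut_apply 𝒜 hβ haj, hu i a hai])

/-- Proportionality of bidegrees. -/
lemma pprop_prop (α : B ≃ₐ[k] B) {i j i' j' : ℕ}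
    (h1 : Pprop 𝒜 α i j) (h2 : Pprop 𝒜 α i' j') : j * i' = j' * i := by
  have h2k : ((2 : k) : k) ≠ 0 := two_ne_zero
  obtain ⟨u, hu⟩ := hP 𝒜 haff hrigid hCT α (Units.mk0 (2 : k) h2k)
  have e1 := hu i j h1
  have e2 := hu i' j' h2
  simp only [Units.val_mk0] at e1 e2
  have e3 : (2 : k) ^ (j * i') = (2 : k) ^ (j' * i) := by
    rw [pow_mul, pow_mul, e1, e2, ← pow_mul, ← pow_mul, mul_comm i i']
  have e4 : ((2 : ℕ) : k) ^ (j * i') = ((2 : ℕ) : k) ^ (j' * i) := by exact_mod_cast e3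
  have e5 : (((2 : ℕ) ^ (j * i') : ℕ) : k) = (((2 : ℕ) ^ (j' * i) : ℕ) : k) := by
    push_cast; exact_mod_cast e4
  exact Nat.pow_right_injective (le_refl 2) (Nat.cast_inj.mp e5)

/-- Existence of a bidegree with prescribed first coordinate. -/
lemma pprop_exists_fst (α : B ≃ₐ[k] B) {i : ℕ} {x : B} (hx0 : x ≠ 0) (hxi : x ∈ 𝒜 i) :
    ∃ j : ℕ, Pprop 𝒜 α i j := by
  classical
  have hxe : x = ∑ j ∈ (DirectSum.decompose 𝒜 (α.symm x)).support,
      α (gproj 𝒜 j (α.symm x)) := (sum_vcomp 𝒜 α x).symm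
  have : ∃ j ∈ (DirectSum.decompose 𝒜 (α.symm x)).support,
      α (gproj 𝒜 j (α.symm x)) ≠ 0 := by
    by_contra hall
    push_neg at hall
    exact hx0 (hxe.trans (Finset.sum_eq_zero hall))
  obtain ⟨j, _, hj0⟩ := this
  refine ⟨j, α (gproj 𝒜 j (α.symm x)), hj0, key 𝒜 haff hrigid α hxi j, ?_⟩
  rw [AlgEquiv.symm_apply_apply]
  exact gproj_mem 𝒜 j (α.symm x)

/-- Existence of a bidegree with prescribed second coordinate. -/
lemma pprop_exists_snd (α : B ≃ₐ[k] B) {j : ℕ} {c : B} (hc0 : c ≠ 0) (hcj : c ∈ 𝒜 j) :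
    ∃ i : ℕ, Pprop 𝒜 α i j := by
  classical
  set x := α c with hxdef
  have hx0 : x ≠ 0 := fun h => hc0 (by rw [hxdef] at h; simpa using congrArg α.symm h)
  have hce : c = ∑ i ∈ (DirectSum.decompose 𝒜 x).support,
      gproj 𝒜 j (α.symm (gproj 𝒜 i x)) := by
    have h1 : c = gproj 𝒜 j (α.symm x) := by
      rw [hxdef, AlgEquiv.symm_apply_apply, gproj_of_mem_same 𝒜 hcj]
    conv_lhs => rw [h1]
    conv_lhs => rw [← sum_gproj 𝒜 x]
    rw [map_sum, map_sum]
  have : ∃ i ∈ (DirectSum.decompose 𝒜 x).support,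
      gproj 𝒜 j (α.symm (gproj 𝒜 i x)) ≠ 0 := by
    by_contra hall
    push_neg at hall
    exact hc0 (hce.trans (Finset.sum_eq_zero hall))
  obtain ⟨i, _, hi0⟩ := this
  refine ⟨i, α (gproj 𝒜 j (α.symm (gproj 𝒜 i x))), ?_, ?_, ?_⟩
  · intro h0
    exact hi0 (by simpa using congrArg α.symm h0)
  · exact key 𝒜 haff hrigid α (gproj_mem 𝒜 i x) j
  · rw [AlgEquiv.symm_apply_apply]
    exact gproj_mem 𝒜 j (α.symm (gproj 𝒜 i x))

/-- In the nontrivial-grading case, there is a bidegree `(i₀, j)` with `j ≥ i₀` where `i₀`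
is the least positive degree. -/
lemma exists_diag_ge (α : B ≃ₐ[k] B)
    (hne : ∃ m : ℕ, 0 < m ∧ ∃ x ∈ 𝒜 m, x ≠ 0)
    {i₀ : ℕ} (hi₀ : (0 < i₀ ∧ ∃ x ∈ 𝒜 i₀, x ≠ 0) ∧
      ∀ m : ℕ, 0 < m → (∃ x ∈ 𝒜 m, x ≠ 0) → i₀ ≤ m) :
    ∃ j₀ : ℕ, i₀ ≤ j₀ ∧ Pprop 𝒜 α i₀ j₀ := by
  obtain ⟨⟨hi₀pos, x, hxmem, hx0⟩, hmin⟩ := hi₀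
  obtain ⟨j₀, hj₀⟩ := pprop_exists_fst 𝒜 haff hrigid hCT α hx0 hxmem
  have hj₀0 : j₀ ≠ 0 := by
    intro h0
    subst h0
    obtain ⟨i', hi'⟩ := pprop_exists_snd 𝒜 haff hrigid hCT α hx0 hxmem
    have := pprop_prop 𝒜 haff hrigid hCT α hj₀ hi'
    simp only [Nat.zero_mul] at this
    nlinarith
  -- the witness shows 𝒜 j₀ ≠ 0
  have hj₀copy := hj₀
  obtain ⟨a, ha0, _, haj⟩ := hj₀copy
  have hsym0 : α.symm a ≠ 0 := fun h => ha0 (by simpa using congrArg α h)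
  have : i₀ ≤ j₀ := hmin j₀ (by omega) ⟨α.symm a, haj, hsym0⟩
  exact ⟨j₀, this, hj₀⟩

/-- All bidegrees lie on the diagonal. -/
lemma pprop_diag (α : B ≃ₐ[k] B) {i j : ℕ} (h : Pprop 𝒜 α i j) : i = j := by
  classical
  obtain ⟨a, ha0, hai, haj⟩ := h
  by_cases htriv : ∃ m : ℕ, 0 < m ∧ ∃ x ∈ 𝒜 m, x ≠ 0
  · -- nontrivial grading: find least positive degree i₀
    obtain ⟨m₀, hm₀⟩ := htriv
    have hex : ∃ m : ℕ, 0 < m ∧ ∃ x ∈ 𝒜 m, x ≠ 0 := ⟨m₀, hm₀⟩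
    set i₀ := Nat.find hex with hi₀def
    have hi₀spec := Nat.find_spec hex
    have hi₀min : ∀ m : ℕ, 0 < m → (∃ x ∈ 𝒜 m, x ≠ 0) → i₀ ≤ m := by
      intro m hm hxm
      exact Nat.find_le ⟨hm, hxm⟩
    have hi₀' : (0 < i₀ ∧ ∃ x ∈ 𝒜 i₀, x ≠ 0) ∧
        ∀ m : ℕ, 0 < m → (∃ x ∈ 𝒜 m, x ≠ 0) → i₀ ≤ m := ⟨hi₀spec, hi₀min⟩
    obtain ⟨j₀, hj₀ge, hj₀⟩ := exists_diag_ge 𝒜 haff hrigid hCT α hex hi₀'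
    obtain ⟨j₁, hj₁ge, hj₁⟩ := exists_diag_ge 𝒜 haff hrigid hCT α.symm hex hi₀'
    have hj₁' : Pprop 𝒜 α j₁ i₀ := pprop_symm 𝒜 hj₁
    have hprod : j₀ * j₁ = i₀ * i₀ := pprop_prop 𝒜 haff hrigid hCT α hj₀ hj₁'
    have hi₀pos : 0 < i₀ := hi₀spec.1
    have hj₀eq : j₀ = i₀ := by nlinarith
    subst hj₀eq
    -- now (i₀, i₀) is a bidegree; proportionality gives i = j
    have := pprop_prop 𝒜 haff hrigid hCT α ⟨a, ha0, hai, haj⟩ hj₀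
    -- j * i₀ = i₀ * i
    nlinarith
  · -- trivial grading
    push_neg at htriv
    have hi : i = 0 := by
      by_contra h0
      exact ha0 (htriv i (by omega) a hai)
    have hj : j = 0 := by
      by_contra h0
      have hsym0 : α.symm a ≠ 0 := fun h => ha0 (by simpa using congrArg α h)
      exact hsym0 (htriv j (by omega) (α.symm a) haj)
    omega

end WithCT
end AuxB

/-- Corollary 2.16 (5cFt2...): let `k` be an algebraically closed field of characteristic
zero, `B` a rigid affine `k`-domain and `𝒜` an `ℕ`-grading of `B`. If `C(T(𝔤)) = T(𝔤)`
then `Aut_k(B) = T(𝔤)`. -/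
theorem statement_10 (k : Type) [Field k] [IsAlgClosed k] [CharZero k]
    (B : Type) [CommRing B] [IsDomain B] [Algebra k B]
    (haff : Algebra.FiniteType k B) (hrigid : IsRigid k B)
    (𝒜 : ℕ → Submodule k B) [GradedAlgebra 𝒜]
    (hCT : ∀ α : B ≃ₐ[k] B,
      (∀ β : B ≃ₐ[k] B, InSubtorusN 𝒜 β → α * β = β * α) ↔ InSubtorusN 𝒜 α) :
    ∀ α : B ≃ₐ[k] B, InSubtorusN 𝒜 α := by
  intro α
  rw [← hCT α]
  intro β hβ
  obtain ⟨t, ht⟩ := hβ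
  have hconj : α * β * α⁻¹ = β := by
    apply ext_bihomog 𝒜 haff hrigid α
    intro i j a hai haj
    rcases eq_or_ne a 0 with rfl | ha0
    · simp
    · have hij : i = j := pprop_diag 𝒜 haff hrigid hCT α ⟨a, ha0, hai, haj⟩
      rw [conj_tAut_apply 𝒜 ht haj, ht i a hai, hij]
  calc α * β = (α * β * α⁻¹) * α := by group
    _ = β * α := by rw [hconj]
end
end
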